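/- arXiv:2309.08517 — 5 statements merged into one kernel-verified Lean document; each statement's English description precedes it below -/
import Mathlib

section
/- Let μ₁, …, μ_n and ν₁, …, ν_n be probability measures on a measurable space E, and let μ = μ₁ ⊗ ⋯ ⊗ μ_n and ν = ν₁ ⊗ ⋯ ⊗ ν_n be the corresponding product measures on E^n. Then ‖μ − ν‖_TV ≤ 1 − ∏_{i=1}^n (1 − ‖μ_i − ν_i‖_TV). -/
open MeasureTheory ProbabilityTheory ENNReal Filter

noncomputable section

/-- Total variation distance between measures. -/
def tvDist {E : Type*} [MeasurableSpace E] (μ ν : Measure E) : ℝ :=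
  ⨆ A : {s : Set E // MeasurableSet s}, |(μ A.1).toReal - (ν A.1).toReal|

/-- Dobrushin contraction coefficient of a Markov kernel. -/
def dobrushin {E : Type*} [MeasurableSpace E] (M : Kernel E E) : ℝ :=
  ⨆ x, ⨆ y, tvDist (M x) (M y)

/-- Boltzmann–Gibbs update Ψ. -/
def BG {E : Type*} [MeasurableSpace E] (G : E → ℝ) (μ : Measure E) : Measure E :=
  (∫⁻ x, ENNReal.ofReal (G x) ∂μ)⁻¹ • μ.withDensity fun x => ENNReal.ofReal (G x)

/-- One-step map `Φ_j(μ) = Ψ_{j-1}(μ) M_j` (for `j ≥ 1`). -/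
def Phi {E : Type*} [MeasurableSpace E] (G : ℕ → E → ℝ) (M : ℕ → Kernel E E)
    (j : ℕ) (μ : Measure E) : Measure E :=
  (BG (G (j - 1)) μ).bind (M j)

/-- Iterated map `Φ_{0,n}`. -/
def PhiComp {E : Type*} [MeasurableSpace E] (G : ℕ → E → ℝ) (M : ℕ → Kernel E E) :
    ℕ → Measure E → Measure E
  | 0 => id
  | n + 1 => fun μ => Phi G M (n + 1) (PhiComp G M n μ)

/-- Empirical measure of `N` particles. -/
def empMeas {E : Type*} [MeasurableSpace E] {N : ℕ} (x : Fin N → E) : Measure E :=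
  ((N : ℝ≥0∞))⁻¹ • ∑ i, Measure.dirac (x i)

/-- Reference-perturbed empirical measure (conditional particle filter). -/
def cEmp {E : Type*} [MeasurableSpace E] {N : ℕ} (xstar : E) (x : Fin N → E) : Measure E :=
  ((N : ℝ≥0∞) + 1)⁻¹ • (Measure.dirac xstar + ∑ i, Measure.dirac (x i))

/-- Composition of kernels `𝐌_{n,n+k} = 𝐌_{n+k} ∘ ⋯ ∘ 𝐌_{n+1}`. -/
def kernelComp {α : Type*} [MeasurableSpace α] (K : ℕ → Kernel α α) (n : ℕ) :
    ℕ → Kernel α α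
  | 0 => Kernel.id
  | k + 1 => (K (n + k + 1)).comp (kernelComp K n k)

/-- Perturbed Boltzmann–Gibbs update `Ψ̂`. -/
def hatBG {E : Type*} [MeasurableSpace E] (G : E → ℝ) (xstar : E) (N : ℕ) (μ : Measure E) :
    Measure E :=
  BG G (((N : ℝ≥0∞) + 1)⁻¹ • Measure.dirac xstar + ((N : ℝ≥0∞) / ((N : ℝ≥0∞) + 1)) • μ)

/-- `L^p` norm of a real random variable. -/
def lpN {Ω : Type*} [MeasurableSpace Ω] (P : Measure Ω) (p : ℝ) (X : Ω → ℝ) : ℝ :=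
  (∫ ω, |X ω| ^ p ∂P) ^ (1 / p)

/-- Oscillation of a real-valued function. -/
def osc {E : Type*} (f : E → ℝ) : ℝ := ⨆ x, ⨆ y, (f x - f y)

/-- Squared Hellinger distance with respect to a dominating measure `lam`. -/
def hellingerSq {E : Type*} [MeasurableSpace E] (lam P Q : Measure E) : ℝ :=
  1 - (∫⁻ x, (P.rnDeriv lam x * Q.rnDeriv lam x) ^ (1 / 2 : ℝ) ∂lam).toReal

/-- `Qaux G m lam g k = Q_{k,k+g}`, defined through the densities `m` of the kernels. -/
def Qaux {E : Type*} [MeasurableSpace E] (G : ℕ → E → ℝ) (m : ℕ → E → E → ℝ)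
    (lam : Measure E) : ℕ → ℕ → (E → ℝ) → E → ℝ
  | 0, _, φ => φ
  | g + 1, k, φ => fun x => G k x * ∫ y, m (k + 1) x y * Qaux G m lam g (k + 1) φ y ∂lam

end

/-!
The total variation distance of probability measures is `1 - (μ ⊓ ν)(E)`: a Hahn decomposition
`E = S ∪ Sᶜ` exhibits `ν|_S + μ|_{Sᶜ}` below both measures, of mass `1 - (μ S - ν S)`. The product
of the meets `μᵢ ⊓ νᵢ` lies below both product measures and has mass `∏ (1 - ‖μᵢ - νᵢ‖_TV)`.
-/

open Set

namespace MeasureTheory.Measure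

theorem pi_mono {ι : Type*} [Fintype ι] {α : ι → Type*} [∀ i, MeasurableSpace (α i)]
    {μ ν : ∀ i, Measure (α i)} (h : ∀ i, μ i ≤ ν i) : Measure.pi μ ≤ Measure.pi ν := by
  have hout : OuterMeasure.pi (fun i => (μ i).toOuterMeasure)
      ≤ OuterMeasure.pi (fun i => (ν i).toOuterMeasure) :=
    OuterMeasure.le_pi.2 fun s _ => (OuterMeasure.pi_pi_le _ s).trans
      (Finset.prod_le_prod' fun i _ => h i (s i))
  refine le_iff.2 fun s hs => ?_
  rw [pi_def, pi_def, toMeasure_apply _ _ hs, toMeasure_apply _ _ hs]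
  exact hout s

variable {α : Type*} [MeasurableSpace α]

theorem real_mono {μ ν : Measure α} [IsFiniteMeasure ν] (h : μ ≤ ν) (s : Set α) :
    μ.real s ≤ ν.real s :=
  ENNReal.toReal_mono (measure_ne_top ν s) (h s)

theorem restrict_le_restrict_of_forall_subset {μ ν : Measure α} {s : Set α}
    (hs : MeasurableSet s) (h : ∀ t, MeasurableSet t → t ⊆ s → μ t ≤ ν t) :
    μ.restrict s ≤ ν.restrict s :=
  le_iff.2 fun t ht => by
    rw [restrict_apply ht, restrict_apply ht]
    exact h _ (ht.inter hs) inter_subset_right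

theorem restrict_add_restrict_compl_le {μ ν κ : Measure α} {s : Set α} (hs : MeasurableSet s)
    (hμ : μ.restrict s ≤ κ.restrict s) (hν : ν.restrict sᶜ ≤ κ.restrict sᶜ) :
    μ.restrict s + ν.restrict sᶜ ≤ κ :=
  (add_le_add hμ hν).trans (restrict_add_restrict_compl hs).le

end MeasureTheory.Measure

section tvDist

variable {E : Type*} [MeasurableSpace E] {μ ν : Measure E}
  [IsProbabilityMeasure μ] [IsProbabilityMeasure ν]

theorem sub_le_tvDist {A : Set E} (hA : MeasurableSet A) : μ.real A - ν.real A ≤ tvDist μ ν := by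
  have hbdd : BddAbove (range fun A : {s : Set E // MeasurableSet s} =>
      |(μ A.1).toReal - (ν A.1).toReal|) := by
    refine ⟨1, ?_⟩
    rintro _ ⟨A, rfl⟩
    exact abs_sub_le_of_nonneg_of_le measureReal_nonneg measureReal_le_one
      measureReal_nonneg measureReal_le_one
  exact (le_abs_self _).trans (le_ciSup hbdd ⟨A, hA⟩)

theorem sub_le_one_sub_of_le {κ : Measure E} (hκμ : κ ≤ μ) (hκν : κ ≤ ν) {A : Set E}
    (hA : MeasurableSet A) : μ.real A - ν.real A ≤ 1 - κ.real univ := by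
  have : IsFiniteMeasure κ := isFiniteMeasure_of_le μ hκμ
  have hκ := measureReal_add_measureReal_compl (μ := κ) hA
  have hμ := measureReal_add_measureReal_compl (μ := μ) hA
  have h₁ := Measure.real_mono hκν A
  have h₂ := Measure.real_mono hκμ Aᶜ
  rw [probReal_univ] at hμ
  linarith

theorem tvDist_le_one_sub_of_le {κ : Measure E} (hκμ : κ ≤ μ) (hκν : κ ≤ ν) :
    tvDist μ ν ≤ 1 - κ.real univ :=
  ciSup_le fun ⟨_, hA⟩ => abs_sub_le_iff.2
    ⟨sub_le_one_sub_of_le hκμ hκν hA, sub_le_one_sub_of_le hκν hκμ hA⟩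

theorem one_sub_tvDist_le_inf : 1 - tvDist μ ν ≤ (μ ⊓ ν).real univ := by
  obtain ⟨S, hS, hνμ, hμν⟩ := hahn_decomposition μ ν
  set κ := ν.restrict S + μ.restrict Sᶜ
  have hκ : κ ≤ μ ⊓ ν := le_inf
    (Measure.restrict_add_restrict_compl_le hS
      (Measure.restrict_le_restrict_of_forall_subset hS hνμ) le_rfl)
    (Measure.restrict_add_restrict_compl_le hS le_rfl
      (Measure.restrict_le_restrict_of_forall_subset hS.compl hμν))
  have : IsFiniteMeasure (μ ⊓ ν) := isFiniteMeasure_of_le μ inf_le_left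
  have hκ_univ : κ.real univ = ν.real S + μ.real Sᶜ := by
    simp only [κ, measureReal_def, Measure.add_apply, Measure.restrict_apply_univ]
    exact ENNReal.toReal_add (measure_ne_top _ _) (measure_ne_top _ _)
  have hμ := measureReal_add_measureReal_compl (μ := μ) hS
  rw [probReal_univ] at hμ
  linarith [sub_le_tvDist (μ := μ) (ν := ν) hS, Measure.real_mono hκ univ]

theorem one_sub_tvDist_eq_inf : 1 - tvDist μ ν = (μ ⊓ ν).real univ := by
  have := tvDist_le_one_sub_of_le (inf_le_left (a := μ) (b := ν)) inf_le_right
  exact le_antisymm one_sub_tvDist_le_inf (by linarith)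

end tvDist

/-- Lemma `producttv`: total variation between product measures is at most
`1 - ∏ (1 - ‖μᵢ - νᵢ‖_TV)`. -/
theorem tv_product_bound {E : Type*} [MeasurableSpace E] (n : ℕ)
    (μ ν : Fin n → Measure E)
    [∀ i, IsProbabilityMeasure (μ i)] [∀ i, IsProbabilityMeasure (ν i)] :
    tvDist (Measure.pi μ) (Measure.pi ν) ≤ 1 - ∏ i, (1 - tvDist (μ i) (ν i)) := by
  have (i : Fin n) : IsFiniteMeasure (μ i ⊓ ν i) := isFiniteMeasure_of_le (μ i) inf_le_left
  have hprod : (Measure.pi fun i => μ i ⊓ ν i).real univ = ∏ i, (1 - tvDist (μ i) (ν i)) := by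
    simp only [one_sub_tvDist_eq_inf, measureReal_def, Measure.pi_univ, ENNReal.toReal_prod]
  rw [← hprod]
  exact tvDist_le_one_sub_of_le (Measure.pi_mono fun i => inf_le_left)
    (Measure.pi_mono fun i => inf_le_right)
end

section
/- Assume (A1). For all N ≥ 1, n ≥ 0 and k ≥ 1, the Dobrushin coefficient of the k-step particle filter kernel satisfies β_TV(𝐌_{n,n+k}) ≤ (1 − ε^N)^k, where ε = (M̲/M̄)². -/
open MeasureTheory ProbabilityTheory ENNReal Filter

/-! Doeblin's argument. Every one-step map satisfies `Φ_j(μ) ≥ M̲ λ`, and `λ(E) ≥ 1/M̄` because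
`M_j(x, ·)` is a probability measure with density at most `M̄`. Hence every particle kernel
`𝐌_j(x, ·)` dominates the fixed product measure `(M̲ λ)^{⊗N}`, whose mass is at least
`(M̲/M̄)^N ≥ ε^N`. A Markov kernel dominating a measure `π` maps `[0,1]`-valued functions to
functions with oscillation at most `1 - π(univ)`, so the oscillation shrinks by that factor at
each of the `k` steps. -/

open Set

theorem MeasureTheory.Measure.pi_mono_s2 {ι : Type*} [Fintype ι] {α : ι → Type*}
    [∀ i, MeasurableSpace (α i)] {μ ν : ∀ i, Measure (α i)} (h : ∀ i, μ i ≤ ν i) :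
    Measure.pi μ ≤ Measure.pi ν := by
  refine Measure.le_iff.2 fun s hs => ?_
  rw [Measure.pi_def, Measure.pi_def, toMeasure_apply _ _ hs, toMeasure_apply _ _ hs]
  refine OuterMeasure.le_boundedBy.2 (fun t => (OuterMeasure.boundedBy_le t).trans ?_) s
  exact Finset.prod_le_prod' fun i _ => Measure.le_iff'.1 (h i) _

section Doeblin

variable {α β γ : Type*} [MeasurableSpace α] [MeasurableSpace β] [MeasurableSpace γ]

theorem lintegral_add_lintegral_one_sub {f : α → ℝ≥0∞} (hf : Measurable f) (hf1 : ∀ z, f z ≤ 1)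
    (μ : Measure α) : ∫⁻ z, f z ∂μ + ∫⁻ z, 1 - f z ∂μ = μ univ := by
  rw [← lintegral_add_left hf, ← lintegral_one]
  exact lintegral_congr fun z => add_tsub_cancel_of_le (hf1 z)

theorem lintegral_mem_Icc_of_le_kernel {κ : Kernel β γ} [IsMarkovKernel κ] {π : Measure γ}
    (hmin : ∀ b, π ≤ κ b) {f : γ → ℝ≥0∞} (hf : Measurable f) (hf1 : ∀ z, f z ≤ 1) (b : β) :
    ∫⁻ z, f z ∂κ b ∈ Icc (∫⁻ z, f z ∂π) (∫⁻ z, f z ∂π + (1 - π univ)) := by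
  refine ⟨lintegral_mono' (hmin b) le_rfl, ?_⟩
  have hcompl : ∫⁻ z, 1 - f z ∂π ≤ ∫⁻ z, 1 - f z ∂κ b := lintegral_mono' (hmin b) le_rfl
  have hfinite : ∫⁻ z, 1 - f z ∂κ b ≠ ∞ :=
    ne_top_of_le_ne_top one_ne_top <| by
      simpa using lintegral_mono (μ := κ b) fun z => tsub_le_self (a := (1 : ℝ≥0∞)) (b := f z)
  refine ENNReal.le_of_add_le_add_right hfinite ?_
  calc ∫⁻ z, f z ∂κ b + ∫⁻ z, 1 - f z ∂κ b = 1 := by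
        rw [lintegral_add_lintegral_one_sub hf hf1, measure_univ]
    _ ≤ π univ + (1 - π univ) := le_add_tsub
    _ = ∫⁻ z, f z ∂π + ∫⁻ z, 1 - f z ∂π + (1 - π univ) := by
        rw [lintegral_add_lintegral_one_sub hf hf1]
    _ ≤ ∫⁻ z, f z ∂π + (1 - π univ) + ∫⁻ z, 1 - f z ∂κ b := by
        rw [add_right_comm]; gcongr

theorem lintegral_comp_le_add_mul_of_le_kernel {κ : Kernel β γ} [IsMarkovKernel κ]
    {L : Kernel α β} [IsMarkovKernel L] {π : Measure γ} (hmin : ∀ b, π ≤ κ b) {a : ℝ≥0∞}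
    (hL : ∀ g : β → ℝ≥0∞, Measurable g → (∀ z, g z ≤ 1) → ∀ x y,
      ∫⁻ z, g z ∂L x ≤ ∫⁻ z, g z ∂L y + a)
    {f : γ → ℝ≥0∞} (hf : Measurable f) (hf1 : ∀ z, f z ≤ 1) (x y : α) :
    ∫⁻ z, f z ∂(κ ∘ₖ L) x ≤ ∫⁻ z, f z ∂(κ ∘ₖ L) y + (1 - π univ) * a := by
  set c := ∫⁻ z, f z ∂π
  set δ := 1 - π univ
  set h : β → ℝ≥0∞ := fun b => (∫⁻ z, f z ∂κ b - c) / δ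
  have hIcc : ∀ b, ∫⁻ z, f z ∂κ b ∈ Icc c (c + δ) := lintegral_mem_Icc_of_le_kernel hmin hf hf1
  have hhm : Measurable h := (hf.lintegral_kernel.sub measurable_const).div_const _
  have hh1 : ∀ b, h b ≤ 1 := fun b =>
    ENNReal.div_le_of_le_mul (by rw [one_mul]; exact tsub_le_iff_left.2 (hIcc b).2)
  have hdecomp : ∀ b, ∫⁻ z, f z ∂κ b = c + δ * h b := fun b => by
    have hδ0 : δ = 0 → ∫⁻ z, f z ∂κ b - c = 0 := fun hδ =>
      tsub_eq_zero_of_le ((hIcc b).2.trans_eq (by rw [hδ, add_zero]))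
    have hδtop : δ ≠ ∞ := ne_top_of_le_ne_top one_ne_top tsub_le_self
    rw [ENNReal.mul_div_cancel' hδ0 (absurd · hδtop), add_tsub_cancel_of_le (hIcc b).1]
  have hint : ∀ w, ∫⁻ z, f z ∂(κ ∘ₖ L) w = c + δ * ∫⁻ b, h b ∂L w := fun w => by
    rw [Kernel.lintegral_comp _ _ _ hf, lintegral_congr hdecomp,
      lintegral_add_left measurable_const, lintegral_const, measure_univ, mul_one,
      lintegral_const_mul _ hhm]
  calc ∫⁻ z, f z ∂(κ ∘ₖ L) x = c + δ * ∫⁻ b, h b ∂L x := hint x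
    _ ≤ c + δ * (∫⁻ b, h b ∂L y + a) := by
        gcongr
        exact hL h hhm hh1 x y
    _ = ∫⁻ z, f z ∂(κ ∘ₖ L) y + δ * a := by rw [hint y, mul_add, add_assoc]

theorem le_bind_of_le_kernel {κ : Kernel α β} {ρ : Measure β} {ν : Measure α}
    [IsProbabilityMeasure ν] (h : ∀ x, ρ ≤ κ x) : ρ ≤ ν.bind κ := by
  refine Measure.le_iff.2 fun A hA => ?_
  rw [Measure.bind_apply hA κ.aemeasurable]
  simpa using lintegral_mono (μ := ν) fun x => Measure.le_iff'.1 (h x) A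

end Doeblin

section KernelComp

variable {α : Type*} [MeasurableSpace α] {K : ℕ → Kernel α α} {n : ℕ}

theorem isMarkovKernel_kernelComp (hK : ∀ j, n < j → IsMarkovKernel (K j)) :
    ∀ k, IsMarkovKernel (kernelComp K n k)
  | 0 => inferInstanceAs (IsMarkovKernel Kernel.id)
  | k + 1 =>
    have := hK (n + k + 1) (by omega)
    have := isMarkovKernel_kernelComp hK k
    inferInstanceAs (IsMarkovKernel ((K (n + k + 1)) ∘ₖ kernelComp K n k))

theorem lintegral_kernelComp_le_add_pow (hK : ∀ j, n < j → IsMarkovKernel (K j))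
    {π : Measure α} (hmin : ∀ j, n < j → ∀ x, π ≤ K j x) (k : ℕ) {f : α → ℝ≥0∞}
    (hf : Measurable f) (hf1 : ∀ z, f z ≤ 1) (x y : α) :
    ∫⁻ z, f z ∂kernelComp K n k x ≤ ∫⁻ z, f z ∂kernelComp K n k y + (1 - π univ) ^ k := by
  induction k generalizing f x y with
  | zero =>
    simp only [kernelComp, Kernel.id_apply, lintegral_dirac' _ hf, pow_zero]
    exact (hf1 x).trans le_add_self
  | succ k ih =>
    have := hK (n + k + 1) (by omega)
    have := isMarkovKernel_kernelComp hK k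
    rw [pow_succ', kernelComp]
    exact lintegral_comp_le_add_mul_of_le_kernel (hmin _ (by omega)) (fun g hg hg1 => ih hg hg1)
      hf hf1 x y

theorem kernelComp_apply_le_add_pow (hK : ∀ j, n < j → IsMarkovKernel (K j))
    {π : Measure α} (hmin : ∀ j, n < j → ∀ x, π ≤ K j x) (k : ℕ) {A : Set α}
    (hA : MeasurableSet A) (x y : α) :
    kernelComp K n k x A ≤ kernelComp K n k y A + (1 - π univ) ^ k := by
  simpa only [lintegral_indicator_one hA] using
    lintegral_kernelComp_le_add_pow hK hmin k (measurable_one.indicator hA)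
      (fun z => indicator_apply_le' (fun _ => le_rfl) (fun _ => zero_le_one)) x y

end KernelComp

theorem dobrushin_le_of_apply_le_add {α : Type*} [MeasurableSpace α] {κ : Kernel α α}
    [IsFiniteKernel κ] {r : ℝ} (hr : 0 ≤ r)
    (h : ∀ x y A, MeasurableSet A → κ x A ≤ κ y A + ENNReal.ofReal r) : dobrushin κ ≤ r := by
  have hdir : ∀ x y A, MeasurableSet A → (κ x A).toReal ≤ (κ y A).toReal + r := fun x y A hA => by
    simpa [ENNReal.toReal_ofReal hr] using
      ENNReal.toReal_le_add (h x y A hA) (measure_ne_top _ _) ofReal_ne_top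
  refine Real.iSup_le (fun x => Real.iSup_le (fun y => Real.iSup_le (fun A => ?_) hr) hr) hr
  exact abs_sub_le_iff.2 ⟨by linarith [hdir x y A A.2], by linarith [hdir y x A A.2]⟩

section FeynmanKac

variable {E : Type*} [MeasurableSpace E]

theorem isProbabilityMeasure_empMeas {N : ℕ} (hN : N ≠ 0) (x : Fin N → E) :
    IsProbabilityMeasure (empMeas x) := by
  constructor
  simp [empMeas, Measure.finsetSum_apply,
    ENNReal.inv_mul_cancel (Nat.cast_ne_zero.2 hN) (natCast_ne_top N)]

theorem isProbabilityMeasure_BG {G : E → ℝ} {Glow Ghigh : ℝ} (hG0 : 0 < Glow)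
    (hGb : ∀ x, Glow ≤ G x ∧ G x ≤ Ghigh) (μ : Measure E) [IsProbabilityMeasure μ] :
    IsProbabilityMeasure (BG G μ) := by
  have hlow : ENNReal.ofReal Glow ≤ ∫⁻ x, ENNReal.ofReal (G x) ∂μ := by
    simpa using lintegral_mono (μ := μ) fun x => ENNReal.ofReal_le_ofReal (hGb x).1
  have hhigh : ∫⁻ x, ENNReal.ofReal (G x) ∂μ ≤ ENNReal.ofReal Ghigh := by
    simpa using lintegral_mono (μ := μ) fun x => ENNReal.ofReal_le_ofReal (hGb x).2
  constructor
  rw [BG, Measure.smul_apply, withDensity_apply _ MeasurableSet.univ, smul_eq_mul,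
    Measure.restrict_univ]
  exact ENNReal.inv_mul_cancel ((ENNReal.ofReal_pos.2 hG0).trans_le hlow).ne'
    (ne_top_of_le_ne_top ofReal_ne_top hhigh)

theorem isProbabilityMeasure_Phi {G : ℕ → E → ℝ} {Glow Ghigh : ℝ} (hG0 : 0 < Glow)
    (hGb : ∀ j x, Glow ≤ G j x ∧ G j x ≤ Ghigh) {M : ℕ → Kernel E E} {j : ℕ}
    [IsMarkovKernel (M j)] (μ : Measure E) [IsProbabilityMeasure μ] :
    IsProbabilityMeasure (Phi G M j μ) := by
  have := isProbabilityMeasure_BG hG0 (hGb (j - 1)) μ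
  rw [Phi]
  infer_instance

theorem smul_le_Phi {G : ℕ → E → ℝ} {Glow Ghigh : ℝ} (hG0 : 0 < Glow)
    (hGb : ∀ j x, Glow ≤ G j x ∧ G j x ≤ Ghigh) {lam : Measure E} {M : ℕ → Kernel E E}
    {m : ℕ → E → E → ℝ} {j : ℕ} {Mlow : ℝ}
    (hMk : ∀ x, M j x = lam.withDensity fun y => ENNReal.ofReal (m j x y))
    (hmb : ∀ x y, Mlow ≤ m j x y) (μ : Measure E) [IsProbabilityMeasure μ] :
    ENNReal.ofReal Mlow • lam ≤ Phi G M j μ := by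
  have := isProbabilityMeasure_BG hG0 (hGb (j - 1)) μ
  refine le_bind_of_le_kernel fun x => ?_
  rw [hMk, ← withDensity_const]
  exact withDensity_mono (ae_of_all _ fun y => ENNReal.ofReal_le_ofReal (hmb x y))

theorem measure_univ_bounds_of_density {lam : Measure E} {M : Kernel E E} [IsMarkovKernel M]
    {m : E → E → ℝ} {Mlow Mhigh : ℝ}
    (hMk : ∀ x, M x = lam.withDensity fun y => ENNReal.ofReal (m x y))
    (hmb : ∀ x y, Mlow ≤ m x y ∧ m x y ≤ Mhigh) (x : E) :
    ENNReal.ofReal Mlow * lam univ ≤ 1 ∧ 1 ≤ ENNReal.ofReal Mhigh * lam univ := by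
  have hmass : ∫⁻ y, ENNReal.ofReal (m x y) ∂lam = 1 := by
    simpa [hMk x] using measure_univ (μ := M x)
  rw [← hmass, ← lintegral_const, ← lintegral_const]
  exact ⟨lintegral_mono fun y => ENNReal.ofReal_le_ofReal (hmb x y).1,
    lintegral_mono fun y => ENNReal.ofReal_le_ofReal (hmb x y).2⟩

theorem ofReal_pow_le_measure_pi_univ {lam : Measure E} [IsFiniteMeasure lam] {Mlow Mhigh : ℝ}
    (hM0 : 0 < Mlow) (hM1 : Mlow ≤ Mhigh) (hhigh : 1 ≤ ENNReal.ofReal Mhigh * lam univ)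
    (N : ℕ) :
    ENNReal.ofReal (((Mlow / Mhigh) ^ 2) ^ N) ≤
      Measure.pi (fun _ : Fin N => ENNReal.ofReal Mlow • lam) univ := by
  have := Measure.smul_finite lam (ofReal_ne_top (r := Mlow))
  have hMhigh : 0 < Mhigh := hM0.trans_le hM1
  have hratio : ENNReal.ofReal ((Mlow / Mhigh) ^ 2) ≤ ENNReal.ofReal Mlow * lam univ :=
    calc ENNReal.ofReal ((Mlow / Mhigh) ^ 2)
        ≤ ENNReal.ofReal (Mlow / Mhigh) := ENNReal.ofReal_le_ofReal <|
          pow_le_of_le_one (by positivity) (div_le_one_of_le₀ hM1 hMhigh.le) two_ne_zero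
      _ = ENNReal.ofReal Mlow * (ENNReal.ofReal Mhigh)⁻¹ := by
          rw [ENNReal.ofReal_div_of_pos hMhigh, div_eq_mul_inv]
      _ ≤ ENNReal.ofReal Mlow * lam univ := by
          gcongr
          exact ENNReal.inv_le_iff_le_mul (fun _ => (ENNReal.ofReal_pos.2 hMhigh).ne')
            (fun h => absurd h ofReal_ne_top) |>.2 hhigh
  rw [Measure.pi_univ, ENNReal.ofReal_pow (by positivity)]
  simpa using pow_le_pow_left' hratio N

end FeynmanKac

theorem particle_filter_easy_bound_general {E : Type*} [MeasurableSpace E]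
    (Mlow Mhigh Glow Ghigh : ℝ)
    (hM0 : 0 < Mlow) (hM1 : Mlow ≤ Mhigh) (hG0 : 0 < Glow)
    (lam : Measure E) (M : ℕ → Kernel E E) [∀ j, IsMarkovKernel (M j)]
    (m : ℕ → E → E → ℝ) (G : ℕ → E → ℝ)
    (hMk : ∀ j x, (M j) x = lam.withDensity fun y => ENNReal.ofReal (m j x y))
    (hmb : ∀ j x y, Mlow ≤ m j x y ∧ m j x y ≤ Mhigh)
    (hGb : ∀ j x, Glow ≤ G j x ∧ G j x ≤ Ghigh)
    (N : ℕ) (hN : 1 ≤ N)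
    (K : ℕ → Kernel (Fin N → E) (Fin N → E))
    (hK : ∀ j, 1 ≤ j → ∀ x, (K j) x = Measure.pi fun _ : Fin N => Phi G M j (empMeas x))
    (n k : ℕ) :
    dobrushin (kernelComp K n k) ≤ (1 - ((Mlow / Mhigh) ^ 2) ^ N) ^ k := by
  have hemp := isProbabilityMeasure_empMeas (E := E) (Nat.one_le_iff_ne_zero.1 hN)
  have hKM : ∀ j, n < j → IsMarkovKernel (K j) := fun j hj =>
    ⟨fun x => by
      have := isProbabilityMeasure_Phi (M := M) (j := j) hG0 hGb (empMeas x)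
      rw [hK j (by omega) x]
      infer_instance⟩
  have := isMarkovKernel_kernelComp hKM k
  have hε : ((Mlow / Mhigh) ^ 2) ^ N ≤ 1 :=
    pow_le_one₀ (by positivity) (pow_le_one₀ (div_nonneg hM0.le (hM0.le.trans hM1))
      (div_le_one_of_le₀ hM1 (hM0.trans_le hM1).le))
  refine dobrushin_le_of_apply_le_add (pow_nonneg (sub_nonneg.2 hε) k) fun x y A hA => ?_
  obtain ⟨hlow, hhigh⟩ := measure_univ_bounds_of_density (hMk 1) (hmb 1) (x ⟨0, hN⟩)
  have : IsFiniteMeasure lam :=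
    ⟨lt_top_iff_ne_top.2 fun h => by simp [h, hM0] at hlow⟩
  have hmin : ∀ j, n < j → ∀ z,
      Measure.pi (fun _ : Fin N => ENNReal.ofReal Mlow • lam) ≤ K j z := fun j hj z => by
    rw [hK j (by omega) z]
    exact Measure.pi_mono_s2 fun _ => smul_le_Phi hG0 hGb (hMk j) (fun x y => (hmb j x y).1) _
  calc kernelComp K n k x A
      ≤ kernelComp K n k y A + (1 - Measure.pi (fun _ => ENNReal.ofReal Mlow • lam) univ) ^ k :=
        kernelComp_apply_le_add_pow hKM hmin k hA x y
    _ ≤ kernelComp K n k y A + ENNReal.ofReal ((1 - ((Mlow / Mhigh) ^ 2) ^ N) ^ k) := by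
        rw [ENNReal.ofReal_pow (sub_nonneg.2 hε),
          ENNReal.ofReal_sub _ (pow_nonneg (sq_nonneg _) N), ENNReal.ofReal_one]
        gcongr
        exact ofReal_pow_le_measure_pi_univ hM0 hM1 hhigh N

/-- Lemma `easybound`: under (A1),
`β_TV(𝐌_{n,n+k}) ≤ (1 - ε^N)^k` with `ε = (M̲/M̄)²`. -/
theorem particle_filter_easy_bound {E : Type*} [MeasurableSpace E]
    (Mlow Mhigh Glow Ghigh : ℝ)
    (hM0 : 0 < Mlow) (hM1 : Mlow ≤ Mhigh) (hG0 : 0 < Glow) (hG1 : Glow ≤ Ghigh)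
    (lam : Measure E) (M : ℕ → Kernel E E) [∀ j, IsMarkovKernel (M j)]
    (m : ℕ → E → E → ℝ) (G : ℕ → E → ℝ)
    (hmm : ∀ j, Measurable (Function.uncurry (m j)))
    (hGm : ∀ j, Measurable (G j))
    (hMk : ∀ j x, (M j) x = lam.withDensity fun y => ENNReal.ofReal (m j x y))
    (hmb : ∀ j x y, Mlow ≤ m j x y ∧ m j x y ≤ Mhigh)
    (hGb : ∀ j x, Glow ≤ G j x ∧ G j x ≤ Ghigh)
    (N : ℕ) (hN : 1 ≤ N)
    (K : ℕ → Kernel (Fin N → E) (Fin N → E))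
    (hK : ∀ j, 1 ≤ j → ∀ x, (K j) x = Measure.pi fun _ : Fin N => Phi G M j (empMeas x))
    (n k : ℕ) (hk : 1 ≤ k) :
    dobrushin (kernelComp K n k) ≤ (1 - ((Mlow / Mhigh) ^ 2) ^ N) ^ k :=
  particle_filter_easy_bound_general Mlow Mhigh Glow Ghigh hM0 hM1 hG0 lam M m G hMk hmb hGb N hN K
    hK n k
end

section
/- Let M be a Markov kernel on a measurable space E admitting a density with respect to a measure λ satisfying M̲ ≤ M(x,y) ≤ M̄ for all x, y ∈ E, where 0 < M̲ ≤ M̄ < ∞. Then for any random probability measures μ and ν on E, E H²(μM, νM) ≤ (1/8)(M̄/M̲)² · sup over measurable φ with osc(φ) ≤ 1 of E(|μ(φ) − ν(φ)|²). -/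
open MeasureTheory ProbabilityTheory ENNReal Filter

/-! The mixture `μM` has the `λ`-density `p y = ∫ m x y ∂μ`, which takes values in `[M̲, M̄]`,
and `λ(E) ≤ 1 / M̲` because every `M x` is a probability measure. Pointwise
`(p + q) / 2 - √(p q) = (√p - √q)² / 2 ≤ (p - q)² / (8 M̲)`, so
`H²(μM, νM) ≤ ∫ (p - q)² dλ / (8 M̲)`. For fixed `y`, `p y - q y = M̄ (μ(φ) - ν(φ))` with
`φ = m (·) y / M̄` of oscillation at most one; taking expectations and exchanging the order of
integration gives the bound. -/

lemma sqrt_mul_le_add_div_two {a b : ℝ} (ha : 0 ≤ a) (hb : 0 ≤ b) : √(a * b) ≤ (a + b) / 2 := by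
  rw [Real.sqrt_mul ha]
  nlinarith [sq_nonneg (√a - √b), Real.sq_sqrt ha, Real.sq_sqrt hb]

lemma add_div_two_sub_sqrt_mul_le {a b c : ℝ} (hc : 0 < c) (ha : c ≤ a) (hb : c ≤ b) :
    (a + b) / 2 - √(a * b) ≤ (a - b) ^ 2 / (8 * c) := by
  have ha0 := hc.le.trans ha
  have hb0 := hc.le.trans hb
  -- the left side is `(√a - √b)² / 2`, and `(a - b)² = (√a - √b)² (√a + √b)² ≥ 4 c (√a - √b)²`
  have hsum : 4 * c ≤ (√a + √b) ^ 2 := by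
    nlinarith [Real.sqrt_le_sqrt ha, Real.sqrt_le_sqrt hb, Real.sq_sqrt hc.le, Real.sqrt_nonneg c]
  rw [Real.sqrt_mul ha0, le_div_iff₀ (by positivity)]
  nlinarith [mul_le_mul_of_nonneg_left hsum (sq_nonneg (√a - √b)), Real.sq_sqrt ha0,
    Real.sq_sqrt hb0]

lemma abs_sub_le_of_mem_Icc {l u a b : ℝ} (hl : 0 ≤ l) (ha : a ∈ Set.Icc l u)
    (hb : b ∈ Set.Icc l u) : |a - b| ≤ u :=
  abs_sub_le_of_nonneg_of_le (hl.trans ha.1) ha.2 (hl.trans hb.1) hb.2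

lemma norm_sq_sub_le_of_mem_Icc {l u a b : ℝ} (hl : 0 ≤ l) (ha : a ∈ Set.Icc l u)
    (hb : b ∈ Set.Icc l u) : ‖(a - b) ^ 2‖ ≤ u ^ 2 := by
  rw [Real.norm_eq_abs, abs_pow]
  exact pow_le_pow_left₀ (abs_nonneg _) (abs_sub_le_of_mem_Icc hl ha hb) 2

section Integrals

variable {E : Type*} [MeasurableSpace E]

lemma integral_mem_Icc_of_forall_mem_Icc {μ : Measure E} [IsProbabilityMeasure μ] {g : E → ℝ}
    {a b : ℝ} (hg : Measurable g) (hab : ∀ x, g x ∈ Set.Icc a b) :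
    ∫ x, g x ∂μ ∈ Set.Icc a b := by
  have hint : Integrable g μ := .of_bound hg.aestronglyMeasurable (|a| + |b|) <| ae_of_all _
    fun x => abs_le.2 ⟨by linarith [neg_abs_le a, (hab x).1, abs_nonneg b],
      by linarith [le_abs_self b, (hab x).2, abs_nonneg a]⟩
  constructor
  · simpa using integral_mono (integrable_const a) hint fun x => (hab x).1
  · simpa using integral_mono hint (integrable_const b) fun x => (hab x).2

lemma abs_integral_sub_integral_le {φ : E → ℝ} {C : ℝ} (hφ : Measurable φ)
    (hφC : ∀ x y, |φ x - φ y| ≤ C) (μ ν : Measure E) [IsProbabilityMeasure μ]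
    [IsProbabilityMeasure ν] : |∫ x, φ x ∂μ - ∫ y, φ y ∂ν| ≤ C := by
  obtain ⟨x₀⟩ := nonempty_of_isProbabilityMeasure μ
  have hint (ρ : Measure E) [IsFiniteMeasure ρ] : Integrable φ ρ :=
    .of_bound hφ.aestronglyMeasurable (|φ x₀| + C) <| ae_of_all _ fun x => by
      have := abs_sub_abs_le_abs_sub (φ x) (φ x₀)
      linarith [hφC x x₀, Real.norm_eq_abs (φ x)]
  have hmean (ρ : Measure E) [IsProbabilityMeasure ρ] (g : E → ℝ) (c : ℝ) (hg : Integrable g ρ)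
      (hgC : ∀ x, |c - g x| ≤ C) : |c - ∫ x, g x ∂ρ| ≤ C := by
    have : c - ∫ x, g x ∂ρ = ∫ x, (c - g x) ∂ρ := by
      rw [integral_sub (integrable_const c) hg, integral_const, probReal_univ, one_smul]
    simpa [this] using
      norm_integral_le_of_norm_le_const (μ := ρ) (f := fun x => c - g x) (ae_of_all _ hgC)
  rw [abs_sub_comm]
  exact hmean μ _ _ (hint μ) fun x => by
    rw [abs_sub_comm]; exact hmean ν _ _ (hint ν) (hφC x)

lemma measurable_uncurry_integral {Ω F : Type*} [MeasurableSpace Ω] [MeasurableSpace F]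
    {μ : Ω → Measure E} (hμ : Measurable μ) [∀ ω, IsProbabilityMeasure (μ ω)]
    {f : E → F → ℝ} (hf : Measurable (Function.uncurry f)) :
    Measurable (Function.uncurry fun ω y => ∫ x, f x y ∂(μ ω)) := by
  let κ : Kernel Ω E := ⟨μ, hμ⟩
  have : IsMarkovKernel κ := ⟨fun ω => inferInstanceAs (IsProbabilityMeasure (μ ω))⟩
  exact (StronglyMeasurable.integral_kernel_prod_right' (κ := Kernel.prodMkRight F κ)
    (f := fun z => f z.2 z.1.2)
    (hf.comp (measurable_snd.prodMk measurable_fst.snd)).stronglyMeasurable).measurable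

lemma integral_integral_le_mul_measureReal_univ {Ω : Type*} [MeasurableSpace Ω]
    {P : Measure Ω} [SFinite P] {lam : Measure E} [IsFiniteMeasure lam] {F : Ω → E → ℝ}
    (hF : Integrable (Function.uncurry F) (P.prod lam)) {B : ℝ}
    (hB : ∀ x, ∫ ω, F ω x ∂P ≤ B) : ∫ ω, ∫ x, F ω x ∂lam ∂P ≤ B * lam.real Set.univ := by
  rw [integral_integral_swap hF]
  calc ∫ x, ∫ ω, F ω x ∂P ∂lam ≤ ∫ _, B ∂lam :=
        integral_mono hF.integral_prod_right (integrable_const B) hB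
    _ = B * lam.real Set.univ := by rw [integral_const, smul_eq_mul, mul_comm]

end Integrals

section HellingerWithDensity

variable {E : Type*} [MeasurableSpace E] {lam : Measure E}

lemma lintegral_eq_one_of_isProbabilityMeasure_withDensity {f : E → ℝ≥0∞}
    [IsProbabilityMeasure (lam.withDensity f)] : ∫⁻ x, f x ∂lam = 1 := by
  simpa [withDensity_apply _ MeasurableSet.univ] using measure_univ (μ := lam.withDensity f)

variable {p q : E → ℝ}

lemma integrable_of_isProbabilityMeasure_withDensity_ofReal (hp : Measurable p)
    (hp0 : ∀ x, 0 ≤ p x) [IsProbabilityMeasure (lam.withDensity fun x => ENNReal.ofReal (p x))] :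
    Integrable p lam :=
  ⟨hp.aestronglyMeasurable, (hasFiniteIntegral_iff_ofReal (ae_of_all _ hp0)).2 <| by
    rw [lintegral_eq_one_of_isProbabilityMeasure_withDensity]; exact one_lt_top⟩

lemma integral_eq_one_of_isProbabilityMeasure_withDensity_ofReal (hp : Measurable p)
    (hp0 : ∀ x, 0 ≤ p x) [IsProbabilityMeasure (lam.withDensity fun x => ENNReal.ofReal (p x))] :
    ∫ x, p x ∂lam = 1 := by
  rw [integral_eq_lintegral_of_nonneg_ae (ae_of_all _ hp0) hp.aestronglyMeasurable,
    lintegral_eq_one_of_isProbabilityMeasure_withDensity, toReal_one]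

variable [SigmaFinite lam]

lemma hellingerSq_withDensity_ofReal (hp : Measurable p) (hq : Measurable q)
    (hp0 : ∀ x, 0 ≤ p x) (hq0 : ∀ x, 0 ≤ q x)
    [IsProbabilityMeasure (lam.withDensity fun x => ENNReal.ofReal (p x))]
    [IsProbabilityMeasure (lam.withDensity fun x => ENNReal.ofReal (q x))] :
    hellingerSq lam (lam.withDensity fun x => ENNReal.ofReal (p x))
        (lam.withDensity fun x => ENNReal.ofReal (q x)) =
      ∫ x, ((p x + q x) / 2 - √(p x * q x)) ∂lam := by
  have hpi := integrable_of_isProbabilityMeasure_withDensity_ofReal (lam := lam) hp hp0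
  have hqi := integrable_of_isProbabilityMeasure_withDensity_ofReal (lam := lam) hq hq0
  have hmean : Integrable (fun x => (p x + q x) / 2) lam := (hpi.add hqi).div_const 2
  have hsqrt : Integrable (fun x => √(p x * q x)) lam :=
    hmean.mono' (by fun_prop) <| ae_of_all _ fun x => by
      rw [Real.norm_eq_abs, abs_of_nonneg (Real.sqrt_nonneg _)]
      exact sqrt_mul_le_add_div_two (hp0 x) (hq0 x)
  have haffinity : ∫⁻ x, ((lam.withDensity fun x => ENNReal.ofReal (p x)).rnDeriv lam x *
      (lam.withDensity fun x => ENNReal.ofReal (q x)).rnDeriv lam x) ^ (1 / 2 : ℝ) ∂lam =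
      ∫⁻ x, ENNReal.ofReal √(p x * q x) ∂lam := by
    refine lintegral_congr_ae ?_
    filter_upwards [Measure.rnDeriv_withDensity lam hp.ennreal_ofReal,
      Measure.rnDeriv_withDensity lam hq.ennreal_ofReal] with x hpx hqx
    rw [hpx, hqx, ← ENNReal.ofReal_mul (hp0 x), Real.sqrt_eq_rpow,
      ENNReal.ofReal_rpow_of_nonneg (mul_nonneg (hp0 x) (hq0 x)) (by norm_num)]
  rw [hellingerSq, haffinity, ← integral_eq_lintegral_of_nonneg_ae
      (ae_of_all _ fun x => Real.sqrt_nonneg _) hsqrt.1,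
    integral_sub hmean hsqrt, integral_div, integral_add hpi hqi,
    integral_eq_one_of_isProbabilityMeasure_withDensity_ofReal hp hp0,
    integral_eq_one_of_isProbabilityMeasure_withDensity_ofReal hq hq0]
  norm_num

lemma hellingerSq_withDensity_ofReal_nonneg (hp : Measurable p) (hq : Measurable q)
    (hp0 : ∀ x, 0 ≤ p x) (hq0 : ∀ x, 0 ≤ q x)
    [IsProbabilityMeasure (lam.withDensity fun x => ENNReal.ofReal (p x))]
    [IsProbabilityMeasure (lam.withDensity fun x => ENNReal.ofReal (q x))] :
    0 ≤ hellingerSq lam (lam.withDensity fun x => ENNReal.ofReal (p x))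
      (lam.withDensity fun x => ENNReal.ofReal (q x)) := by
  rw [hellingerSq_withDensity_ofReal hp hq hp0 hq0]
  exact integral_nonneg fun x => sub_nonneg.2 (sqrt_mul_le_add_div_two (hp0 x) (hq0 x))

lemma hellingerSq_withDensity_ofReal_le {c : ℝ} (hc : 0 < c) (hp : Measurable p)
    (hq : Measurable q) (hpc : ∀ x, c ≤ p x) (hqc : ∀ x, c ≤ q x)
    (hpq : Integrable (fun x => (p x - q x) ^ 2) lam)
    [IsProbabilityMeasure (lam.withDensity fun x => ENNReal.ofReal (p x))]
    [IsProbabilityMeasure (lam.withDensity fun x => ENNReal.ofReal (q x))] :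
    hellingerSq lam (lam.withDensity fun x => ENNReal.ofReal (p x))
        (lam.withDensity fun x => ENNReal.ofReal (q x)) ≤
      (∫ x, (p x - q x) ^ 2 ∂lam) / (8 * c) := by
  have hp0 x := hc.le.trans (hpc x)
  have hq0 x := hc.le.trans (hqc x)
  rw [hellingerSq_withDensity_ofReal hp hq hp0 hq0, ← integral_div]
  exact integral_mono_of_nonneg
    (ae_of_all _ fun x => sub_nonneg.2 (sqrt_mul_le_add_div_two (hp0 x) (hq0 x)))
    (hpq.div_const _) (ae_of_all _ fun x => add_div_two_sub_sqrt_mul_le hc (hpc x) (hqc x))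

end HellingerWithDensity

section KernelDensity

variable {E : Type*} [MeasurableSpace E] {lam : Measure E} {M : Kernel E E} {m : E → E → ℝ}
  {c C : ℝ}

lemma measure_univ_le_of_kernel_density [IsMarkovKernel M]
    (hMk : ∀ x, M x = lam.withDensity fun y => ENNReal.ofReal (m x y))
    (hmc : ∀ x y, c ≤ m x y) : lam Set.univ ≤ (ENNReal.ofReal c)⁻¹ := by
  rcases isEmpty_or_nonempty E with hE | ⟨⟨x₀⟩⟩
  · simp [Measure.eq_zero_of_isEmpty lam]
  have : IsProbabilityMeasure (lam.withDensity fun y => ENNReal.ofReal (m x₀ y)) :=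
    hMk x₀ ▸ inferInstance
  rw [ENNReal.le_inv_iff_mul_le]
  calc lam Set.univ * ENNReal.ofReal c = ∫⁻ _, ENNReal.ofReal c ∂lam := by
        rw [lintegral_const, mul_comm]
    _ ≤ ∫⁻ y, ENNReal.ofReal (m x₀ y) ∂lam := lintegral_mono fun y => ofReal_le_ofReal (hmc x₀ y)
    _ = 1 := lintegral_eq_one_of_isProbabilityMeasure_withDensity

lemma isFiniteMeasure_of_kernel_density [IsMarkovKernel M] (hc : 0 < c)
    (hMk : ∀ x, M x = lam.withDensity fun y => ENNReal.ofReal (m x y))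
    (hmc : ∀ x y, c ≤ m x y) : IsFiniteMeasure lam :=
  ⟨(measure_univ_le_of_kernel_density hMk hmc).trans_lt (by simpa using hc)⟩

lemma measureReal_univ_le_of_kernel_density [IsMarkovKernel M] (hc : 0 < c)
    (hMk : ∀ x, M x = lam.withDensity fun y => ENNReal.ofReal (m x y))
    (hmc : ∀ x y, c ≤ m x y) : lam.real Set.univ ≤ c⁻¹ := by
  have := ENNReal.toReal_mono (by simpa using hc) (measure_univ_le_of_kernel_density hMk hmc)
  rwa [toReal_inv, toReal_ofReal hc.le] at this

lemma bind_eq_withDensity_lintegral [SFinite lam] {f : E → E → ℝ≥0∞}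
    (hf : Measurable (Function.uncurry f)) (hMk : ∀ x, M x = lam.withDensity (f x))
    (μ : Measure E) [SFinite μ] :
    μ.bind M = lam.withDensity fun y => ∫⁻ x, f x y ∂μ := by
  ext A hA
  rw [Measure.bind_apply hA M.aemeasurable, withDensity_apply _ hA]
  simp_rw [hMk, withDensity_apply _ hA]
  exact lintegral_lintegral_swap hf.aemeasurable

lemma bind_eq_withDensity_integral [SFinite lam] (hm : Measurable (Function.uncurry m))
    (hm0 : ∀ x y, 0 ≤ m x y) (hmC : ∀ x y, m x y ≤ C)
    (hMk : ∀ x, M x = lam.withDensity fun y => ENNReal.ofReal (m x y))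
    (μ : Measure E) [IsFiniteMeasure μ] :
    μ.bind M = lam.withDensity fun y => ENNReal.ofReal (∫ x, m x y ∂μ) := by
  rw [bind_eq_withDensity_lintegral (f := fun x y => ENNReal.ofReal (m x y)) hm.ennreal_ofReal hMk]
  congr with y
  refine (ofReal_integral_eq_lintegral_ofReal ?_ (ae_of_all _ (hm0 · y))).symm
  refine .of_bound hm.of_uncurry_right.aestronglyMeasurable C (ae_of_all _ fun x => ?_)
  rw [Real.norm_eq_abs, abs_of_nonneg (hm0 x y)]
  exact hmC x y

lemma hellingerSq_bind_nonneg [IsMarkovKernel M] [IsFiniteMeasure lam] (hc : 0 < c)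
    (hm : Measurable (Function.uncurry m)) (hmb : ∀ x y, m x y ∈ Set.Icc c C)
    (hMk : ∀ x, M x = lam.withDensity fun y => ENNReal.ofReal (m x y))
    (μ ν : Measure E) [IsProbabilityMeasure μ] [IsProbabilityMeasure ν] :
    0 ≤ hellingerSq lam (μ.bind M) (ν.bind M) := by
  have hm0 x y : 0 ≤ m x y := hc.le.trans (hmb x y).1
  have hbind := bind_eq_withDensity_integral hm hm0 (fun x y => (hmb x y).2) hMk
  have : IsProbabilityMeasure (lam.withDensity fun y => ENNReal.ofReal (∫ x, m x y ∂μ)) :=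
    hbind μ ▸ inferInstance
  have : IsProbabilityMeasure (lam.withDensity fun y => ENNReal.ofReal (∫ x, m x y ∂ν)) :=
    hbind ν ▸ inferInstance
  rw [hbind μ, hbind ν]
  exact hellingerSq_withDensity_ofReal_nonneg
    hm.stronglyMeasurable.integral_prod_left.measurable
    hm.stronglyMeasurable.integral_prod_left.measurable
    (fun y => integral_nonneg (hm0 · y)) (fun y => integral_nonneg (hm0 · y))

lemma hellingerSq_bind_le [IsMarkovKernel M] [IsFiniteMeasure lam] (hc : 0 < c)
    (hm : Measurable (Function.uncurry m)) (hmb : ∀ x y, m x y ∈ Set.Icc c C)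
    (hMk : ∀ x, M x = lam.withDensity fun y => ENNReal.ofReal (m x y))
    (μ ν : Measure E) [IsProbabilityMeasure μ] [IsProbabilityMeasure ν] :
    hellingerSq lam (μ.bind M) (ν.bind M) ≤
      (∫ y, (∫ x, m x y ∂μ - ∫ x, m x y ∂ν) ^ 2 ∂lam) / (8 * c) := by
  have hm0 x y : 0 ≤ m x y := hc.le.trans (hmb x y).1
  have hbind := bind_eq_withDensity_integral hm hm0 (fun x y => (hmb x y).2) hMk
  have : IsProbabilityMeasure (lam.withDensity fun y => ENNReal.ofReal (∫ x, m x y ∂μ)) :=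
    hbind μ ▸ inferInstance
  have : IsProbabilityMeasure (lam.withDensity fun y => ENNReal.ofReal (∫ x, m x y ∂ν)) :=
    hbind ν ▸ inferInstance
  have hdens (κ : Measure E) [IsProbabilityMeasure κ] y : ∫ x, m x y ∂κ ∈ Set.Icc c C :=
    integral_mem_Icc_of_forall_mem_Icc hm.of_uncurry_right (hmb · y)
  have hmeas (κ : Measure E) [IsProbabilityMeasure κ] : Measurable fun y => ∫ x, m x y ∂κ :=
    hm.stronglyMeasurable.integral_prod_left.measurable
  rw [hbind μ, hbind ν]
  exact hellingerSq_withDensity_ofReal_le hc (hmeas μ) (hmeas ν) (fun y => (hdens μ y).1)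
    (fun y => (hdens ν y).1) (.of_bound (((hmeas μ).sub (hmeas ν)).pow_const 2).aestronglyMeasurable
      (C ^ 2) (ae_of_all _ fun y => norm_sq_sub_le_of_mem_Icc hc.le (hdens μ y) (hdens ν y)))

end KernelDensity

section TestFunctions

variable {E Ω : Type*} [MeasurableSpace E] [MeasurableSpace Ω]

noncomputable def meanSqOscDist (P : Measure Ω) (μ ν : Ω → Measure E) : ℝ :=
  ⨆ φ : {f : E → ℝ // Measurable f ∧ ∀ x y, |f x - f y| ≤ 1},
    ∫ ω, |(∫ x, φ.1 x ∂(μ ω)) - ∫ x, φ.1 x ∂(ν ω)| ^ 2 ∂P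

variable {P : Measure Ω} {μ ν : Ω → Measure E}

lemma meanSqOscDist_nonneg : 0 ≤ meanSqOscDist P μ ν :=
  Real.iSup_nonneg fun _ => integral_nonneg fun _ => sq_nonneg _

lemma integral_sq_abs_sub_le_mul_meanSqOscDist [IsProbabilityMeasure P]
    [∀ ω, IsProbabilityMeasure (μ ω)] [∀ ω, IsProbabilityMeasure (ν ω)] {φ : E → ℝ} {C : ℝ}
    (hC : 0 < C) (hφ : Measurable φ) (hφC : ∀ x y, |φ x - φ y| ≤ C) :
    ∫ ω, |∫ x, φ x ∂(μ ω) - ∫ x, φ x ∂(ν ω)| ^ 2 ∂P ≤ C ^ 2 * meanSqOscDist P μ ν := by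
  have hbdd : BddAbove (Set.range fun ψ : {f : E → ℝ // Measurable f ∧ ∀ x y, |f x - f y| ≤ 1} =>
      ∫ ω, |(∫ x, ψ.1 x ∂(μ ω)) - ∫ x, ψ.1 x ∂(ν ω)| ^ 2 ∂P) := by
    refine ⟨1, ?_⟩
    rintro _ ⟨ψ, rfl⟩
    simpa using integral_mono_of_nonneg (ae_of_all _ fun _ => sq_nonneg _)
      (integrable_const (μ := P) 1) (ae_of_all _ fun ω => pow_le_one₀ (abs_nonneg _)
        (abs_integral_sub_integral_le ψ.2.1 ψ.2.2 (μ ω) (ν ω)))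
  have hscaled := le_ciSup hbdd ⟨fun x => φ x / C, hφ.div_const C, fun x y => by
    rw [← sub_div, abs_div, abs_of_pos hC, div_le_one hC]; exact hφC x y⟩
  simp only [integral_div, ← sub_div, abs_div, abs_of_pos hC, div_pow] at hscaled
  rwa [div_le_iff₀ (by positivity), mul_comm] at hscaled

end TestFunctions

theorem hellinger_sq_bound_general {E Ω : Type*} [MeasurableSpace E] [MeasurableSpace Ω]
    (Mlow Mhigh : ℝ) (hM0 : 0 < Mlow)
    (lam : Measure E) (M : Kernel E E) [IsMarkovKernel M]
    (m : E → E → ℝ) (hmm : Measurable (Function.uncurry m))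
    (hMk : ∀ x, M x = lam.withDensity fun y => ENNReal.ofReal (m x y))
    (hmb : ∀ x y, Mlow ≤ m x y ∧ m x y ≤ Mhigh)
    (P : Measure Ω) [IsProbabilityMeasure P]
    (μ ν : Ω → Measure E) (hμ : Measurable μ) (hν : Measurable ν)
    [∀ ω, IsProbabilityMeasure (μ ω)] [∀ ω, IsProbabilityMeasure (ν ω)] :
    ∫ ω, hellingerSq lam ((μ ω).bind ⇑M) ((ν ω).bind ⇑M) ∂P
      ≤ (1 / 8) * (Mhigh / Mlow) ^ 2 *
        ⨆ φ : {f : E → ℝ // Measurable f ∧ ∀ x y, |f x - f y| ≤ 1},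
          ∫ ω, |(∫ x, φ.1 x ∂(μ ω)) - ∫ x, φ.1 x ∂(ν ω)| ^ 2 ∂P := by
  have : IsFiniteMeasure lam := isFiniteMeasure_of_kernel_density hM0 hMk fun x y => (hmb x y).1
  let F : Ω → E → ℝ := fun ω y => (∫ x, m x y ∂(μ ω) - ∫ x, m x y ∂(ν ω)) ^ 2
  have hF : Integrable (Function.uncurry F) (P.prod lam) :=
    .of_bound (((measurable_uncurry_integral hμ hmm).sub
      (measurable_uncurry_integral hν hmm)).pow_const 2).aestronglyMeasurable (Mhigh ^ 2)
      (ae_of_all _ fun z => norm_sq_sub_le_of_mem_Icc hM0.le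
        (integral_mem_Icc_of_forall_mem_Icc hmm.of_uncurry_right (hmb · z.2))
        (integral_mem_Icc_of_forall_mem_Icc hmm.of_uncurry_right (hmb · z.2)))
  have hFy (y : E) : ∫ ω, F ω y ∂P ≤ Mhigh ^ 2 * meanSqOscDist P μ ν := by
    simpa only [sq_abs] using integral_sq_abs_sub_le_mul_meanSqOscDist
      (hM0.trans_le ((hmb y y).1.trans (hmb y y).2)) hmm.of_uncurry_right
      fun x x' => abs_sub_le_of_mem_Icc hM0.le (hmb x y) (hmb x' y)
  calc ∫ ω, hellingerSq lam ((μ ω).bind ⇑M) ((ν ω).bind ⇑M) ∂P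
      ≤ ∫ ω, (∫ y, F ω y ∂lam) / (8 * Mlow) ∂P :=
        integral_mono_of_nonneg
          (ae_of_all _ fun ω => hellingerSq_bind_nonneg hM0 hmm hmb hMk (μ ω) (ν ω))
          (hF.integral_prod_left.div_const _)
          (ae_of_all _ fun ω => hellingerSq_bind_le hM0 hmm hmb hMk (μ ω) (ν ω))
    _ = (∫ ω, ∫ y, F ω y ∂lam ∂P) / (8 * Mlow) := integral_div _ _
    _ ≤ Mhigh ^ 2 * meanSqOscDist P μ ν * lam.real Set.univ / (8 * Mlow) := by
        gcongr
        exact integral_integral_le_mul_measureReal_univ hF hFy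
    _ ≤ Mhigh ^ 2 * meanSqOscDist P μ ν * Mlow⁻¹ / (8 * Mlow) := by
        have := meanSqOscDist_nonneg (P := P) (μ := μ) (ν := ν)
        gcongr
        exact measureReal_univ_le_of_kernel_density hM0 hMk fun x y => (hmb x y).1
    _ = 1 / 8 * (Mhigh / Mlow) ^ 2 * meanSqOscDist P μ ν := by
        field_simp

/-- Lemma `h2bound`: for a kernel with density bounded between `M̲` and `M̄`,
the expected squared Hellinger distance after one mutation step is controlled by
the worst-case mean-square difference of integrals over test functions of oscillation ≤ 1. -/
theorem hellinger_sq_bound {E Ω : Type*} [MeasurableSpace E] [MeasurableSpace Ω]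
    (Mlow Mhigh : ℝ) (hM0 : 0 < Mlow) (hM1 : Mlow ≤ Mhigh)
    (lam : Measure E) (M : Kernel E E) [IsMarkovKernel M]
    (m : E → E → ℝ) (hmm : Measurable (Function.uncurry m))
    (hMk : ∀ x, M x = lam.withDensity fun y => ENNReal.ofReal (m x y))
    (hmb : ∀ x y, Mlow ≤ m x y ∧ m x y ≤ Mhigh)
    (P : Measure Ω) [IsProbabilityMeasure P]
    (μ ν : Ω → Measure E) (hμ : Measurable μ) (hν : Measurable ν)
    [∀ ω, IsProbabilityMeasure (μ ω)] [∀ ω, IsProbabilityMeasure (ν ω)] :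
    ∫ ω, hellingerSq lam ((μ ω).bind ⇑M) ((ν ω).bind ⇑M) ∂P
      ≤ (1 / 8) * (Mhigh / Mlow) ^ 2 *
        ⨆ φ : {f : E → ℝ // Measurable f ∧ ∀ x y, |f x - f y| ≤ 1},
          ∫ ω, |(∫ x, φ.1 x ∂(μ ω)) - ∫ x, φ.1 x ∂(ν ω)| ^ 2 ∂P :=
  hellinger_sq_bound_general Mlow Mhigh hM0 lam M m hmm hMk hmb P μ ν hμ hν
end

section
/- Let G_k : E → (0,∞) be a bounded measurable function, let x*_k ∈ E, let N ≥ 1, and define the perturbed update Ψ̂_k(μ) = Ψ_k((N+1)^{-1} δ_{x*_k} + (N/(N+1)) μ). Then for any random probability measure μ on E, any p ≥ 1, and any measurable φ : E → ℝ with osc(φ) < ∞: ‖Ψ̂_k(μ)(φ) − Ψ_k(μ)(φ)‖_p ≤ ‖ G_k(x*_k)/(N·μ(G_k) + G_k(x*_k)) ‖_p · osc(φ). -/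
open MeasureTheory ProbabilityTheory ENNReal Filter

section Helpers

open MeasureTheory

variable {E : Type*} [MeasurableSpace E]

lemma integrable_of_bdd (ν : Measure E) [IsFiniteMeasure ν] {f : E → ℝ}
    (hf : Measurable f) {B : ℝ} (hB : ∀ x, |f x| ≤ B) : Integrable f ν :=
  (integrable_const B).mono' hf.aestronglyMeasurable (Filter.Eventually.of_forall hB)

lemma osc_pair {φ : E → ℝ} {B : ℝ} (hB : ∀ x, |φ x| ≤ B) (x y : E) :
    φ x - φ y ≤ osc φ := by
  haveI : Nonempty E := ⟨x⟩
  have hb2 : ∀ x y : E, φ x - φ y ≤ 2 * B := fun x y => by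
    linarith [abs_le.1 (hB x), abs_le.1 (hB y)]
  have hbdd : ∀ x : E, BddAbove (Set.range fun y => φ x - φ y) := fun x =>
    ⟨2 * B, by rintro _ ⟨y, rfl⟩; exact hb2 x y⟩
  have h1 : φ x - φ y ≤ ⨆ y, (φ x - φ y) := le_ciSup (hbdd x) y
  have hbdd2 : BddAbove (Set.range fun x => ⨆ y, (φ x - φ y)) :=
    ⟨2 * B, by rintro _ ⟨x, rfl⟩; exact ciSup_le (hb2 x)⟩
  exact h1.trans (le_ciSup (f := fun x => ⨆ y, (φ x - φ y)) hbdd2 x)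

lemma BG_integral (G : E → ℝ) (hG : Measurable G) (hG0 : ∀ x, 0 ≤ G x)
    {B : ℝ} (hGB : ∀ x, G x ≤ B)
    (ν : Measure E) [IsFiniteMeasure ν] (hpos : 0 < ∫ x, G x ∂ν)
    (φ : E → ℝ) : ∫ y, φ y ∂(BG G ν) = (∫ x, G x * φ x ∂ν) / (∫ x, G x ∂ν) := by
  have hGint : Integrable G ν :=
    integrable_of_bdd ν hG (B := B) fun x => by
      rw [abs_of_nonneg (hG0 x)]; exact hGB x
  have hlint : (∫⁻ x, ENNReal.ofReal (G x) ∂ν) = ENNReal.ofReal (∫ x, G x ∂ν) :=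
    (ofReal_integral_eq_lintegral_ofReal hGint (Filter.Eventually.of_forall hG0)).symm
  have hwd : ∫ y, φ y ∂(ν.withDensity fun x => ENNReal.ofReal (G x))
      = ∫ x, G x * φ x ∂ν := by
    have he : (fun x => ENNReal.ofReal (G x))
        = fun x => (((G x).toNNReal : NNReal) : ℝ≥0∞) := rfl
    rw [he, integral_withDensity_eq_integral_smul hG.real_toNNReal φ]
    refine integral_congr_ae (Filter.Eventually.of_forall fun x => ?_)
    simp [NNReal.smul_def, Real.coe_toNNReal _ (hG0 x)]
  unfold BG
  rw [integral_smul_measure, hwd, hlint, ENNReal.toReal_inv,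
    ENNReal.toReal_ofReal hpos.le, smul_eq_mul, inv_mul_eq_div]

lemma cMeas_prob (xstar : E) (N : ℕ) (μ : Measure E) [IsProbabilityMeasure μ] :
    IsProbabilityMeasure (((N : ℝ≥0∞) + 1)⁻¹ • Measure.dirac xstar
        + ((N : ℝ≥0∞) / ((N : ℝ≥0∞) + 1)) • μ) := by
  constructor
  have h0 : ((N : ℝ≥0∞) + 1) ≠ 0 := by simp
  have ht : ((N : ℝ≥0∞) + 1) ≠ ⊤ := by simp
  simp only [Measure.add_apply, Measure.smul_apply, smul_eq_mul, measure_univ, mul_one]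
  rw [div_eq_mul_inv]
  calc ((N : ℝ≥0∞) + 1)⁻¹ + (N : ℝ≥0∞) * ((N : ℝ≥0∞) + 1)⁻¹
      = (1 + (N : ℝ≥0∞)) * ((N : ℝ≥0∞) + 1)⁻¹ := by rw [add_mul, one_mul]
    _ = 1 := by rw [add_comm]; exact ENNReal.mul_inv_cancel h0 ht

lemma cMeas_integral (xstar : E) (N : ℕ) (μ : Measure E) [IsProbabilityMeasure μ]
    (f : E → ℝ) (hf : Measurable f) {B : ℝ} (hB : ∀ x, |f x| ≤ B) :
    ∫ y, f y ∂(((N : ℝ≥0∞) + 1)⁻¹ • Measure.dirac xstar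
        + ((N : ℝ≥0∞) / ((N : ℝ≥0∞) + 1)) • μ)
      = ((N : ℝ) + 1)⁻¹ * f xstar + ((N : ℝ) / ((N : ℝ) + 1)) * ∫ y, f y ∂μ := by
  have h0 : ((N : ℝ≥0∞) + 1) ≠ 0 := by simp
  have ht : ((N : ℝ≥0∞) + 1) ≠ ⊤ := by simp
  have hs : ((N : ℝ≥0∞) + 1)⁻¹ ≠ ⊤ := ENNReal.inv_ne_top.2 h0
  have htt : ((N : ℝ≥0∞) / ((N : ℝ≥0∞) + 1)) ≠ ⊤ :=
    (ENNReal.div_lt_top (by simp) h0).ne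
  have h1 : IsFiniteMeasure (((N : ℝ≥0∞) + 1)⁻¹ • Measure.dirac xstar) := by
    constructor
    simp only [Measure.smul_apply, smul_eq_mul, measure_univ, mul_one]
    exact hs.lt_top
  have h2 : IsFiniteMeasure (((N : ℝ≥0∞) / ((N : ℝ≥0∞) + 1)) • μ) := by
    constructor
    simp only [Measure.smul_apply, smul_eq_mul, measure_univ, mul_one]
    exact htt.lt_top
  have hf1 : Integrable f (((N : ℝ≥0∞) + 1)⁻¹ • Measure.dirac xstar) :=
    integrable_of_bdd _ hf hB
  have hf2 : Integrable f (((N : ℝ≥0∞) / ((N : ℝ≥0∞) + 1)) • μ) :=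
    integrable_of_bdd _ hf hB
  have hNt : ((N : ℝ≥0∞) + 1).toReal = (N : ℝ) + 1 := by
    rw [ENNReal.toReal_add (by simp) (by simp)]; simp
  have ts : (((N : ℝ≥0∞) + 1)⁻¹).toReal = ((N : ℝ) + 1)⁻¹ := by
    rw [ENNReal.toReal_inv, hNt]
  have tt' : (((N : ℝ≥0∞)) / ((N : ℝ≥0∞) + 1)).toReal = (N : ℝ) / ((N : ℝ) + 1) := by
    rw [ENNReal.toReal_div, hNt, ENNReal.toReal_natCast]
  rw [integral_add_measure hf1 hf2, integral_smul_measure, integral_smul_measure,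
    integral_dirac' f xstar hf.stronglyMeasurable, ts, tt', smul_eq_mul, smul_eq_mul]

lemma pointwise_hat_bound (G : E → ℝ) (hG : Measurable G) (hGpos : ∀ x, 0 < G x)
    {B : ℝ} (hGB : ∀ x, G x ≤ B) (xstar : E) (N : ℕ)
    (μ : Measure E) [IsProbabilityMeasure μ]
    (φ : E → ℝ) (hφ : Measurable φ) {Bφ : ℝ} (hφB : ∀ x, |φ x| ≤ Bφ) :
    |(∫ y, φ y ∂(hatBG G xstar N μ)) - ∫ y, φ y ∂(BG G μ)|
      ≤ G xstar / ((N : ℝ) * (∫ y, G y ∂μ) + G xstar) * osc φ := by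
  have hG0 : ∀ x, 0 ≤ G x := fun x => (hGpos x).le
  have hGabs : ∀ x, |G x| ≤ B := fun x => by rw [abs_of_nonneg (hG0 x)]; exact hGB x
  have hGint : Integrable G μ := integrable_of_bdd μ hG hGabs
  have hGφ : Measurable fun x => G x * φ x := hG.mul hφ
  have hGφB : ∀ x, |G x * φ x| ≤ B * Bφ := fun x => by
    rw [abs_mul]
    exact mul_le_mul (hGabs x) (hφB x) (abs_nonneg _) ((abs_nonneg _).trans (hGabs x))
  have hGφint : Integrable (fun x => G x * φ x) μ := integrable_of_bdd μ hGφ hGφB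
  have hb : 0 < ∫ y, G y ∂μ := by
    rw [integral_pos_iff_support_of_nonneg hG0 hGint]
    have hsupp : Function.support G = Set.univ := by
      ext x; simp [Function.support, (hGpos x).ne']
    rw [hsupp]; simp
  have ha0 : 0 < G xstar := hGpos xstar
  have hnn0 : (0:ℝ) ≤ (N:ℝ) := Nat.cast_nonneg N
  have hBGv : ∫ y, φ y ∂(BG G μ) = (∫ x, G x * φ x ∂μ) / (∫ y, G y ∂μ) :=
    BG_integral G hG hG0 hGB μ hb φ
  have hprob := cMeas_prob xstar N μ
  have hIG := cMeas_integral xstar N μ G hG hGabs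
  have hIGφ := cMeas_integral xstar N μ (fun x => G x * φ x) hGφ hGφB
  have hdenpos : 0 < ∫ y, G y ∂(((N : ℝ≥0∞) + 1)⁻¹ • Measure.dirac xstar
      + ((N : ℝ≥0∞) / ((N : ℝ≥0∞) + 1)) • μ) := by
    rw [hIG]
    have h1 : (0:ℝ) < ((N:ℝ)+1)⁻¹ * G xstar := by positivity
    have h2 : (0:ℝ) ≤ ((N:ℝ)/((N:ℝ)+1)) * ∫ y, G y ∂μ :=
      mul_nonneg (by positivity) hb.le
    linarith
  have hhat : ∫ y, φ y ∂(hatBG G xstar N μ)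
      = (((N:ℝ)+1)⁻¹ * ((fun x => G x * φ x) xstar)
            + ((N:ℝ)/((N:ℝ)+1)) * ∫ x, G x * φ x ∂μ)
        / (((N:ℝ)+1)⁻¹ * G xstar + ((N:ℝ)/((N:ℝ)+1)) * ∫ y, G y ∂μ) := by
    unfold hatBG
    rw [BG_integral G hG hG0 hGB _ hdenpos φ, hIG, hIGφ]
  set a := G xstar with ha
  set b := ∫ y, G y ∂μ with hbdef
  set C := ∫ x, G x * φ x ∂μ with hCdef
  set nn : ℝ := (N:ℝ) with hnn
  have hden2 : (0:ℝ) < nn * b + a := by nlinarith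
  have hnp1 : (0:ℝ) < nn + 1 := by linarith
  simp only [] at hhat
  have key : ((nn+1)⁻¹ * (a * φ xstar) + (nn/(nn+1)) * C)
        / ((nn+1)⁻¹ * a + (nn/(nn+1)) * b)
      - C / b = a / (nn * b + a) * (φ xstar - C / b) := by
    field_simp
    ring
  rw [hhat, hBGv, key, abs_mul,
    abs_of_nonneg (div_nonneg ha0.le hden2.le)]
  refine mul_le_mul_of_nonneg_left ?_ (div_nonneg ha0.le hden2.le)
  have h2 : b * φ xstar - C ≤ b * osc φ := by
    have hpt : ∀ y, G y * φ xstar - G y * φ y ≤ G y * osc φ := fun y => by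
      have h := osc_pair hφB xstar y
      nlinarith [hG0 y]
    have e1 : b * φ xstar - C = ∫ y, (G y * φ xstar - G y * φ y) ∂μ := by
      rw [integral_sub (hGint.mul_const _) hGφint, integral_mul_const]
    have e2 : (b : ℝ) * osc φ = ∫ y, G y * osc φ ∂μ := by
      rw [integral_mul_const]
    rw [e1, e2]
    exact integral_mono ((hGint.mul_const _).sub hGφint) (hGint.mul_const _) hpt
  have h3 : C - b * φ xstar ≤ b * osc φ := by
    have hpt : ∀ y, G y * φ y - G y * φ xstar ≤ G y * osc φ := fun y => by
      have h := osc_pair hφB y xstar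
      nlinarith [hG0 y]
    have e1 : C - b * φ xstar = ∫ y, (G y * φ y - G y * φ xstar) ∂μ := by
      rw [integral_sub hGφint (hGint.mul_const _), integral_mul_const]
    have e2 : (b : ℝ) * osc φ = ∫ y, G y * osc φ ∂μ := by
      rw [integral_mul_const]
    rw [e1, e2]
    exact integral_mono (hGφint.sub (hGint.mul_const _)) (hGint.mul_const _) hpt
  have e1 : φ xstar - C / b = (b * φ xstar - C) / b := by field_simp
  rw [e1, abs_div, abs_of_pos hb, div_le_iff₀ hb, abs_le]
  constructor <;> nlinarith

end Helpers


/-- Lemma `hatpsibound`: the perturbed Boltzmann–Gibbs update `Ψ̂_k`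
differs from `Ψ_k` in `L^p` by at most `‖G_k(x*_k)/(N μ(G_k) + G_k(x*_k))‖_p · osc(φ)`. -/
theorem hat_bg_perturbation_bound {E Ω : Type*} [MeasurableSpace E] [MeasurableSpace Ω]
    (P : Measure Ω) [IsProbabilityMeasure P]
    (G : E → ℝ) (hGmeas : Measurable G) (hGpos : ∀ x, 0 < G x) (hGbd : ∃ B, ∀ x, G x ≤ B)
    (xstar : E) (N : ℕ) (hN : 1 ≤ N)
    (μ : Ω → Measure E) (hμ : Measurable μ) [∀ ω, IsProbabilityMeasure (μ ω)]
    (p : ℝ) (hp : 1 ≤ p)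
    (φ : E → ℝ) (hφ : Measurable φ) (hφbd : ∃ B, ∀ x, |φ x| ≤ B) :
    lpN P p (fun ω => (∫ y, φ y ∂(hatBG G xstar N (μ ω))) - ∫ y, φ y ∂(BG G (μ ω)))
      ≤ lpN P p (fun ω => G xstar / ((N : ℝ) * (∫ y, G y ∂(μ ω)) + G xstar)) * osc φ := by
  obtain ⟨B, hGB⟩ := hGbd
  obtain ⟨Bφ, hφB⟩ := hφbd
  have hp0 : (0:ℝ) < p := lt_of_lt_of_le one_pos hp
  set X : Ω → ℝ := fun ω =>
    (∫ y, φ y ∂(hatBG G xstar N (μ ω))) - ∫ y, φ y ∂(BG G (μ ω)) with hX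
  set g : Ω → ℝ := fun ω => G xstar / ((N : ℝ) * (∫ y, G y ∂(μ ω)) + G xstar) with hg
  have hosc : 0 ≤ osc φ := by
    have := osc_pair hφB xstar xstar
    linarith
  have hbpos : ∀ ω, 0 < ∫ y, G y ∂(μ ω) := by
    intro ω
    have hGint : Integrable G (μ ω) := integrable_of_bdd _ hGmeas
      (B := B) fun x => by rw [abs_of_nonneg (hGpos x).le]; exact hGB x
    rw [integral_pos_iff_support_of_nonneg (fun x => (hGpos x).le) hGint]
    have : Function.support G = Set.univ := by
      ext x; simp [Function.support, (hGpos x).ne']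
    rw [this]; simp
  have hg0 : ∀ ω, 0 ≤ g ω := fun ω => by
    have := hbpos ω
    have := hGpos xstar
    positivity
  have hg1 : ∀ ω, g ω ≤ 1 := fun ω => by
    rw [hg]
    have hb := hbpos ω
    have ha := hGpos xstar
    rw [div_le_one (by positivity)]
    nlinarith [Nat.cast_nonneg (α := ℝ) N]
  have hpt : ∀ ω, |X ω| ≤ g ω * osc φ := fun ω =>
    pointwise_hat_bound G hGmeas hGpos hGB xstar N (μ ω) φ hφ hφB
  -- measurability of g
  have hbmeas : Measurable fun ω => ∫ y, G y ∂(μ ω) := by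
    have h0 : ∀ ν : Measure E, ∫ y, G y ∂ν = (∫⁻ y, ENNReal.ofReal (G y) ∂ν).toReal :=
      fun ν => integral_eq_lintegral_of_nonneg_ae
        (Filter.Eventually.of_forall fun x => (hGpos x).le) hGmeas.aestronglyMeasurable
    simp_rw [h0]
    exact ((Measure.measurable_lintegral hGmeas.ennreal_ofReal).comp hμ).ennreal_toReal
  have hgmeas : Measurable g := (measurable_const.div
    ((hbmeas.const_mul _).add_const _))
  have hint : Integrable (fun ω => (g ω * osc φ) ^ p) P := by
    refine (integrable_const ((osc φ) ^ p)).mono'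
      (((hgmeas.mul_const _).pow measurable_const).aestronglyMeasurable)
      (Filter.Eventually.of_forall fun ω => ?_)
    rw [Real.norm_eq_abs, abs_of_nonneg (Real.rpow_nonneg (mul_nonneg (hg0 ω) hosc) p)]
    refine Real.rpow_le_rpow (mul_nonneg (hg0 ω) hosc) ?_ hp0.le
    nlinarith [hg1 ω, hg0 ω]
  have step1 : ∫ ω, |X ω| ^ p ∂P ≤ ∫ ω, (g ω * osc φ) ^ p ∂P := by
    refine integral_mono_of_nonneg
      (Filter.Eventually.of_forall fun ω => Real.rpow_nonneg (abs_nonneg _) p) hint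
      (Filter.Eventually.of_forall fun ω => ?_)
    exact Real.rpow_le_rpow (abs_nonneg _) (hpt ω) hp0.le
  have step2 : ∫ ω, (g ω * osc φ) ^ p ∂P = (∫ ω, |g ω| ^ p ∂P) * (osc φ) ^ p := by
    have e : ∀ ω, (g ω * osc φ) ^ p = |g ω| ^ p * (osc φ) ^ p := fun ω => by
      rw [Real.mul_rpow (hg0 ω) hosc, abs_of_nonneg (hg0 ω)]
    simp_rw [e]
    exact integral_mul_const _ _
  unfold lpN
  calc (∫ ω, |X ω| ^ p ∂P) ^ (1 / p)
      ≤ ((∫ ω, |g ω| ^ p ∂P) * (osc φ) ^ p) ^ (1 / p) := by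
        refine Real.rpow_le_rpow ?_ (step1.trans_eq step2) (by positivity)
        exact integral_nonneg fun ω => Real.rpow_nonneg (abs_nonneg _) p
    _ = (∫ ω, |g ω| ^ p ∂P) ^ (1 / p) * ((osc φ) ^ p) ^ (1 / p) :=
        Real.mul_rpow (integral_nonneg fun ω => Real.rpow_nonneg (abs_nonneg _) p)
          (Real.rpow_nonneg hosc p)
    _ = (∫ ω, |g ω| ^ p ∂P) ^ (1 / p) * osc φ := by
        rw [← Real.rpow_mul hosc, mul_one_div, div_self hp0.ne', Real.rpow_one]
end

section
/- Let E be a Polish space and N ≥ 1. Let μ and ν be exchangeable probability distributions on E^N, let X^{1:N} ∼ μ and Y^{1:N} ∼ ν, and let η_x^N = N^{-1} Σ_{i=1}^N δ_{X^i} and η_y^N = N^{-1} Σ_{i=1}^N δ_{Y^i} be the corresponding random empirical measures. Then the infimum of P(η̃_x^N ≠ η̃_y^N) over all couplings (η̃_x^N, η̃_y^N) of (η_x^N, η_y^N) equals the infimum of P(X̃^{1:N} ≠ Ỹ^{1:N}) over all couplings (X̃^{1:N}, Ỹ^{1:N}) of (X^{1:N}, Y^{1:N}). -/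
open MeasureTheory ProbabilityTheory ENNReal Filter

/-!
A coupling of the particle vectors pushes forward to a coupling of their empirical measures, and
equal vectors have equal empirical measures. Conversely, fix a Borel embedding `e : E → ℝ`. Listing
the atoms of an empirical measure `η` in increasing order of `e` is a measurable map back to
`E^N`, since the `k`-th entry `y` satisfies `e y ≤ t` exactly when `k < N η (e⁻¹' (-∞, t])`.
Applying it to both components of a coupling of the empirical measures, and then one uniformly
random permutation to both vectors, gives a coupling of the particle vectors: its marginals are
`μ` and `ν` by exchangeability, and the vectors differ only where the empirical measures did.
-/

noncomputable section PermAverage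

variable {α : Type*} [MeasurableSpace α] {N : ℕ}

lemma measurable_comp_perm (σ : Equiv.Perm (Fin N)) :
    Measurable fun x : Fin N → α => x ∘ σ :=
  measurable_pi_lambda _ fun i => measurable_pi_apply (σ i)

def permAverage (ρ : Measure (Fin N → α)) : Measure (Fin N → α) :=
  (N.factorial : ℝ≥0∞)⁻¹ • ∑ σ : Equiv.Perm (Fin N), ρ.map fun x => x ∘ σ

lemma permAverage_apply (ρ : Measure (Fin N → α)) {s : Set (Fin N → α)}
    (hs : MeasurableSet s) :
    permAverage ρ s =
      (N.factorial : ℝ≥0∞)⁻¹ *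
        ∫⁻ x, ∑ σ : Equiv.Perm (Fin N), s.indicator (1 : (Fin N → α) → ℝ≥0∞) (x ∘ σ) ∂ρ := by
  have hmeas (σ : Equiv.Perm (Fin N)) :
      Measurable fun x : Fin N → α => s.indicator (1 : (Fin N → α) → ℝ≥0∞) (x ∘ σ) :=
    (measurable_one.indicator hs).comp (measurable_comp_perm σ)
  rw [permAverage, Measure.smul_apply, Measure.finsetSum_apply, smul_eq_mul,
    lintegral_finsetSum _ fun σ _ => hmeas σ]
  congr 1
  refine Finset.sum_congr rfl fun σ _ => ?_
  rw [Measure.map_apply (measurable_comp_perm σ) hs, ← lintegral_indicator_one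
    (measurable_comp_perm σ hs)]
  rfl

lemma permAverage_eq_self {μ : Measure (Fin N → α)}
    (hμ : ∀ σ : Equiv.Perm (Fin N), μ.map (fun x => x ∘ σ) = μ) : permAverage μ = μ := by
  have hN : (N.factorial : ℝ≥0∞) ≠ 0 := by exact_mod_cast N.factorial_ne_zero
  simp only [permAverage, hμ, Finset.sum_const, Finset.card_univ, Fintype.card_perm,
    Fintype.card_fin]
  rw [← Nat.cast_smul_eq_nsmul ℝ≥0∞, smul_smul,
    ENNReal.inv_mul_cancel hN (ENNReal.natCast_ne_top _), one_smul]

lemma permAverage_map_eq_self {μ : Measure (Fin N → α)}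
    (hμ : ∀ σ : Equiv.Perm (Fin N), μ.map (fun x => x ∘ σ) = μ)
    {f : (Fin N → α) → Fin N → α} (hf : Measurable f)
    (hf_perm : ∀ x, ∃ σ : Equiv.Perm (Fin N), f x = x ∘ σ) :
    permAverage (μ.map f) = μ := by
  have orbit_sum (x : Fin N → α) (s : Set (Fin N → α)) :
      ∑ σ : Equiv.Perm (Fin N), s.indicator (1 : (Fin N → α) → ℝ≥0∞) (f x ∘ σ) =
        ∑ σ : Equiv.Perm (Fin N), s.indicator (1 : (Fin N → α) → ℝ≥0∞) (x ∘ σ) := by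
    obtain ⟨τ, hτ⟩ := hf_perm x
    rw [hτ]
    exact Equiv.sum_comp (Equiv.mulLeft τ) fun σ => s.indicator 1 (x ∘ σ)
  ext s hs
  rw [permAverage_apply _ hs, lintegral_map _ hf]
  · simp_rw [orbit_sum]
    rw [← permAverage_apply _ hs, permAverage_eq_self hμ]
  · exact Finset.measurable_sum _ fun σ _ =>
      (measurable_one.indicator hs).comp (measurable_comp_perm σ)

def diagPermAverage (Γ : Measure ((Fin N → α) × (Fin N → α))) :
    Measure ((Fin N → α) × (Fin N → α)) :=
  (N.factorial : ℝ≥0∞)⁻¹ •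
    ∑ σ : Equiv.Perm (Fin N), Γ.map (Prod.map (· ∘ σ) (· ∘ σ))

lemma measurable_prodMap_comp_perm (σ : Equiv.Perm (Fin N)) :
    Measurable (Prod.map (fun x : Fin N → α => x ∘ σ) fun x : Fin N → α => x ∘ σ) :=
  (measurable_comp_perm σ).prodMap (measurable_comp_perm σ)

lemma map_fst_diagPermAverage (Γ : Measure ((Fin N → α) × (Fin N → α))) :
    (diagPermAverage Γ).map Prod.fst = permAverage (Γ.map Prod.fst) := by
  ext s hs
  rw [Measure.map_apply measurable_fst hs, diagPermAverage, permAverage, Measure.smul_apply,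
    Measure.smul_apply, Measure.finsetSum_apply, Measure.finsetSum_apply]
  congr 1
  refine Finset.sum_congr rfl fun σ _ => ?_
  rw [Measure.map_apply (measurable_prodMap_comp_perm (α := α) σ) (measurable_fst hs),
    Measure.map_apply (measurable_comp_perm σ) hs, Measure.map_apply measurable_fst
      (measurable_comp_perm σ hs)]
  rfl

lemma map_snd_diagPermAverage (Γ : Measure ((Fin N → α) × (Fin N → α))) :
    (diagPermAverage Γ).map Prod.snd = permAverage (Γ.map Prod.snd) := by
  ext s hs
  rw [Measure.map_apply measurable_snd hs, diagPermAverage, permAverage, Measure.smul_apply,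
    Measure.smul_apply, Measure.finsetSum_apply, Measure.finsetSum_apply]
  congr 1
  refine Finset.sum_congr rfl fun σ _ => ?_
  rw [Measure.map_apply (measurable_prodMap_comp_perm (α := α) σ) (measurable_snd hs),
    Measure.map_apply (measurable_comp_perm σ) hs, Measure.map_apply measurable_snd
      (measurable_comp_perm σ hs)]
  rfl

lemma diagPermAverage_apply_ne [MeasurableEq (Fin N → α)]
    (Γ : Measure ((Fin N → α) × (Fin N → α))) :
    diagPermAverage Γ {q | q.1 ≠ q.2} = Γ {q | q.1 ≠ q.2} := by
  have hne : MeasurableSet {q : (Fin N → α) × (Fin N → α) | q.1 ≠ q.2} :=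
    (measurableSet_eq_fun measurable_fst measurable_snd).compl
  have hpre (σ : Equiv.Perm (Fin N)) :
      Prod.map (fun x : Fin N → α => x ∘ σ) (fun x : Fin N → α => x ∘ σ) ⁻¹' {q | q.1 ≠ q.2} =
        {q | q.1 ≠ q.2} := by
    ext q
    exact σ.surjective.injective_comp_right.ne_iff
  have hN : (N.factorial : ℝ≥0∞) ≠ 0 := by exact_mod_cast N.factorial_ne_zero
  simp only [diagPermAverage, Measure.smul_apply, Measure.finsetSum_apply,
    Measure.map_apply (measurable_prodMap_comp_perm (α := α) _) hne, hpre, Finset.sum_const,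
    Finset.card_univ, Fintype.card_perm, Fintype.card_fin, nsmul_eq_mul, smul_eq_mul, ← mul_assoc]
  rw [ENNReal.inv_mul_cancel hN (ENNReal.natCast_ne_top _), one_mul]

end PermAverage

section EmpiricalMeasure

open Finset

variable {E : Type*} [MeasurableSpace E] {N : ℕ}

open scoped Classical in
lemma empMeas_apply (x : Fin N → E) {s : Set E} (hs : MeasurableSet s) :
    empMeas x s = (N : ℝ≥0∞)⁻¹ * #{i | x i ∈ s} := by
  simp only [empMeas, Measure.smul_apply, Measure.finsetSum_apply, smul_eq_mul,
    Measure.dirac_apply' _ hs, Set.indicator_apply, Pi.one_apply]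
  rw [Finset.sum_boole]

open scoped Classical in
lemma natCast_mul_empMeas_apply (hN : N ≠ 0) (x : Fin N → E) {s : Set E} (hs : MeasurableSet s) :
    N * empMeas x s = #{i | x i ∈ s} := by
  rw [empMeas_apply x hs, ← mul_assoc, ENNReal.mul_inv_cancel (by exact_mod_cast hN)
    (ENNReal.natCast_ne_top N), one_mul]

lemma measurable_empMeas : Measurable fun x : Fin N → E => empMeas x := by
  refine Measure.measurable_measure.2 fun s hs => ?_
  simp only [empMeas, Measure.smul_apply, Measure.finsetSum_apply, smul_eq_mul,
    Measure.dirac_apply' _ hs]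
  exact (Finset.measurable_sum _ fun i _ =>
    (measurable_one.indicator hs).comp (measurable_pi_apply i)).const_mul _

lemma isFiniteMeasure_empMeas (x : Fin N → E) : IsFiniteMeasure (empMeas x) := by
  constructor
  rcases eq_or_ne N 0 with rfl | hN
  · simp [empMeas]
  · rw [empMeas_apply x MeasurableSet.univ]
    exact ENNReal.mul_lt_top (ENNReal.inv_lt_top.2 (by positivity)) (ENNReal.natCast_lt_top _)

lemma empMeas_comp_perm (x : Fin N → E) (σ : Equiv.Perm (Fin N)) :
    empMeas (x ∘ σ) = empMeas x := by
  rw [empMeas, empMeas]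
  congr 1
  exact Equiv.sum_comp σ fun i => Measure.dirac (x i)

end EmpiricalMeasure

section SortedParticles

variable {E : Type*} [MeasurableSpace E] {N : ℕ}

lemma natCast_lt_mul_empMeas_Iic_iff {e : E → ℝ} (he : Measurable e) (x : Fin N → E)
    (k : Fin N) (t : ℝ) :
    (k : ℝ≥0∞) < N * empMeas x (e ⁻¹' Set.Iic t) ↔ e ((x ∘ Tuple.sort (e ∘ x)) k) ≤ t := by
  classical
  rw [← empMeas_comp_perm x (Tuple.sort (e ∘ x)),
    natCast_mul_empMeas_apply k.pos.ne' _ (he measurableSet_Iic), Nat.cast_lt]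
  convert Tuple.lt_card_le_iff_apply_le_of_monotone (Tuple.monotone_sort (e ∘ x)) (a := t) using 4
  all_goals rfl

lemma measurable_comp_sort_comap_empMeas {e : E → ℝ} (he : MeasurableEmbedding e) :
    Measurable[MeasurableSpace.comap (fun x : Fin N → E => empMeas x) inferInstance]
      fun x => x ∘ Tuple.sort (e ∘ x) := by
  refine (@measurable_pi_iff _ _ _ (.comap (fun x : Fin N → E => empMeas x) inferInstance) _ _).2
    fun k => ?_
  rw [← he.measurable_comp_iff]
  refine measurable_of_Iic fun t => ⟨{m : Measure E | (k : ℝ≥0∞) < N * m (e ⁻¹' Set.Iic t)},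
    measurableSet_lt measurable_const
      ((Measure.measurable_coe (he.measurable measurableSet_Iic)).const_mul _), ?_⟩
  ext x
  exact natCast_lt_mul_empMeas_Iic_iff he.measurable x k t

lemma exists_measurable_section_empMeas [StandardBorelSpace E] [Nonempty (Fin N → E)] :
    ∃ g : Measure E → Fin N → E,
      Measurable g ∧ ∀ x, ∃ σ : Equiv.Perm (Fin N), g (empMeas x) = x ∘ σ := by
  obtain ⟨e, he⟩ := exists_measurableEmbedding_real E
  obtain ⟨g, hg, hsort⟩ := (measurable_comp_sort_comap_empMeas (N := N) he).exists_eq_measurable_comp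
  exact ⟨g, hg, fun x => ⟨Tuple.sort (e ∘ x), (congrFun hsort x).symm⟩⟩

end SortedParticles

lemma exists_measurableSet_subset_diagonal_measure (E : Type*) [MeasurableSpace E]
    [StandardBorelSpace E] :
    ∃ D : Set (Measure E × Measure E), MeasurableSet D ∧ (∀ q ∈ D, q.1 = q.2) ∧
      ∀ m : Measure E, IsFiniteMeasure m → (m, m) ∈ D := by
  obtain ⟨e, he⟩ := exists_measurableEmbedding_real E
  have measurable_eval (s : Set E) (hs : MeasurableSet s) (f : Measure E × Measure E → Measure E)
      (hf : Measurable f) : Measurable fun q => f q s := (Measure.measurable_coe hs).comp hf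
  refine ⟨{q | q.1 Set.univ < ∞} ∩ {q | q.1 Set.univ = q.2 Set.univ} ∩
    ⋂ r : ℚ, {q | q.1 (e ⁻¹' Set.Iic (r : ℝ)) = q.2 (e ⁻¹' Set.Iic (r : ℝ))}, ?_, ?_, ?_⟩
  · refine ((measurableSet_lt (measurable_eval _ .univ _ measurable_fst) measurable_const).inter
      (measurableSet_eq_fun (measurable_eval _ .univ _ measurable_fst)
        (measurable_eval _ .univ _ measurable_snd))).inter
      (.iInter fun r => measurableSet_eq_fun ?_ ?_)
    · exact measurable_eval _ (he.measurable measurableSet_Iic) _ measurable_fst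
    · exact measurable_eval _ (he.measurable measurableSet_Iic) _ measurable_snd
  · rintro ⟨m₁, m₂⟩ ⟨⟨hfin, huniv⟩, hIic⟩
    have : IsFiniteMeasure m₁ := ⟨hfin⟩
    have hmap : m₁.map e = m₂.map e := by
      refine ext_of_generate_finite _ (BorelSpace.measurable_eq.trans
        Real.borel_eq_generateFrom_Iic_rat) Real.isPiSystem_Iic_rat ?_ ?_
      · simp only [Set.mem_iUnion, Set.mem_singleton_iff]
        rintro _ ⟨r, rfl⟩
        rw [Measure.map_apply he.measurable measurableSet_Iic,
          Measure.map_apply he.measurable measurableSet_Iic]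
        exact Set.mem_iInter.1 hIic r
      · rw [Measure.map_apply he.measurable .univ, Measure.map_apply he.measurable .univ]
        exact huniv
    rw [← he.comap_map m₁, hmap, he.comap_map]
  · intro m _
    exact ⟨⟨measure_lt_top m _, rfl⟩, Set.mem_iInter.2 fun _ => rfl⟩

section Couplings

variable {X Y : Type*} [MeasurableSpace X] [MeasurableSpace Y]

lemma map_fst_map_prodMap (γ : Measure (X × X)) {f : X → Y} (hf : Measurable f) :
    (γ.map (Prod.map f f)).map Prod.fst = (γ.map Prod.fst).map f := by
  rw [Measure.map_map measurable_fst (hf.prodMap hf), Measure.map_map hf measurable_fst]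
  rfl

lemma map_snd_map_prodMap (γ : Measure (X × X)) {f : X → Y} (hf : Measurable f) :
    (γ.map (Prod.map f f)).map Prod.snd = (γ.map Prod.snd).map f := by
  rw [Measure.map_map measurable_snd (hf.prodMap hf), Measure.map_map hf measurable_snd]
  rfl

/-- `{q | q.1 ≠ q.2}` need not be measurable in `Y × Y` (e.g. for `Y = Measure E`), so its mass
under the image coupling is controlled through a measurable part `D` of the diagonal. -/
lemma map_prodMap_apply_ne_le {f : X → Y} (hf : Measurable f) {D : Set (Y × Y)}
    (hD : MeasurableSet D) (hD_diag : ∀ q ∈ D, q.1 = q.2) (hfD : ∀ x, (f x, f x) ∈ D)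
    (γ : Measure (X × X)) :
    γ.map (Prod.map f f) {q | q.1 ≠ q.2} ≤ γ {q | q.1 ≠ q.2} :=
  calc γ.map (Prod.map f f) {q | q.1 ≠ q.2}
      ≤ γ.map (Prod.map f f) Dᶜ := measure_mono fun q hq hqD => hq (hD_diag q hqD)
    _ = γ (Prod.map f f ⁻¹' Dᶜ) := Measure.map_apply (hf.prodMap hf) hD.compl
    _ ≤ γ {q | q.1 ≠ q.2} := measure_mono fun q hq hq_eq => hq (by
        simpa [Prod.map, hq_eq] using hfD q.2)

lemma isFiniteMeasure_of_map_fst_eq {γ : Measure (X × Y)} {ρ : Measure X} [IsFiniteMeasure ρ]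
    (h : γ.map Prod.fst = ρ) : IsFiniteMeasure γ := by
  have : IsFiniteMeasure (γ.map Prod.fst) := h ▸ ‹_›
  exact Measure.isFiniteMeasure_of_map measurable_fst.aemeasurable

end Couplings

section EmpiricalCouplings

variable {E : Type*} [MeasurableSpace E] [StandardBorelSpace E] {N : ℕ}
  {μ ν : Measure (Fin N → E)}

lemma exists_empMeas_coupling_le {γ : Measure ((Fin N → E) × (Fin N → E))}
    (h₁ : γ.map Prod.fst = μ) (h₂ : γ.map Prod.snd = ν) :
    ∃ γ' : Measure (Measure E × Measure E),
      γ'.map Prod.fst = μ.map (fun x => empMeas x) ∧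
      γ'.map Prod.snd = ν.map (fun x => empMeas x) ∧
      γ' {q | q.1 ≠ q.2} ≤ γ {q | q.1 ≠ q.2} := by
  obtain ⟨D, hD, hD_diag, hD_finite⟩ := exists_measurableSet_subset_diagonal_measure E
  refine ⟨γ.map (Prod.map (fun x => empMeas x) fun x => empMeas x), ?_, ?_,
    map_prodMap_apply_ne_le measurable_empMeas hD hD_diag
      (fun x => hD_finite _ (isFiniteMeasure_empMeas x)) γ⟩
  · rw [map_fst_map_prodMap γ measurable_empMeas, h₁]
  · rw [map_snd_map_prodMap γ measurable_empMeas, h₂]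

lemma exists_coupling_le_of_exchangeable [Nonempty (Fin N → E)]
    (hμ : ∀ σ : Equiv.Perm (Fin N), μ.map (fun x => x ∘ σ) = μ)
    (hν : ∀ σ : Equiv.Perm (Fin N), ν.map (fun x => x ∘ σ) = ν)
    {γ : Measure (Measure E × Measure E)}
    (h₁ : γ.map Prod.fst = μ.map (fun x => empMeas x))
    (h₂ : γ.map Prod.snd = ν.map (fun x => empMeas x)) :
    ∃ γ' : Measure ((Fin N → E) × (Fin N → E)),
      γ'.map Prod.fst = μ ∧ γ'.map Prod.snd = ν ∧ γ' {q | q.1 ≠ q.2} ≤ γ {q | q.1 ≠ q.2} := by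
  obtain ⟨g, hg, hg_perm⟩ := exists_measurable_section_empMeas (E := E) (N := N)
  have permAverage_lift {ρ : Measure (Fin N → E)}
      (hρ : ∀ σ : Equiv.Perm (Fin N), ρ.map (fun x => x ∘ σ) = ρ) :
      permAverage ((ρ.map fun x => empMeas x).map g) = ρ := by
    rw [Measure.map_map hg measurable_empMeas]
    exact permAverage_map_eq_self hρ (hg.comp measurable_empMeas) hg_perm
  refine ⟨diagPermAverage (γ.map (Prod.map g g)), ?_, ?_, ?_⟩
  · rw [map_fst_diagPermAverage, map_fst_map_prodMap γ hg, h₁, permAverage_lift hμ]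
  · rw [map_snd_diagPermAverage, map_snd_map_prodMap γ hg, h₂, permAverage_lift hν]
  · rw [diagPermAverage_apply_ne]
    exact map_prodMap_apply_ne_le hg measurableSet_diagonal (fun _ hq => hq) (fun _ => rfl) γ

end EmpiricalCouplings

theorem empirical_coupling_inf_eq_general {E : Type*} [MeasurableSpace E]
    [TopologicalSpace E] [PolishSpace E] [BorelSpace E]
    (N : ℕ) (μ ν : Measure (Fin N → E))
    [IsProbabilityMeasure μ]
    (hμ : ∀ σ : Equiv.Perm (Fin N), μ.map (fun x => x ∘ σ) = μ)
    (hν : ∀ σ : Equiv.Perm (Fin N), ν.map (fun x => x ∘ σ) = ν) :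
    sInf {r : ℝ | ∃ γ : Measure (Measure E × Measure E),
        γ.map Prod.fst = μ.map (fun x => empMeas x) ∧
        γ.map Prod.snd = ν.map (fun x => empMeas x) ∧
        r = (γ {q | q.1 ≠ q.2}).toReal} =
      sInf {r : ℝ | ∃ γ : Measure ((Fin N → E) × (Fin N → E)),
        γ.map Prod.fst = μ ∧
        γ.map Prod.snd = ν ∧
        r = (γ {q | q.1 ≠ q.2}).toReal} := by
  have := nonempty_of_isProbabilityMeasure μ
  refine csInf_eq_csInf_of_forall_exists_le ?_ ?_
  · rintro _ ⟨γ, h₁, h₂, rfl⟩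
    have := isFiniteMeasure_of_map_fst_eq h₁
    obtain ⟨γ', h₁', h₂', hle⟩ := exists_coupling_le_of_exchangeable hμ hν h₁ h₂
    exact ⟨_, ⟨γ', h₁', h₂', rfl⟩, ENNReal.toReal_mono (measure_ne_top γ _) hle⟩
  · rintro _ ⟨γ, h₁, h₂, rfl⟩
    have := isFiniteMeasure_of_map_fst_eq h₁
    obtain ⟨γ', h₁', h₂', hle⟩ := exists_empMeas_coupling_le h₁ h₂
    exact ⟨_, ⟨γ', h₁', h₂', rfl⟩, ENNReal.toReal_mono (measure_ne_top γ _) hle⟩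

/-- Lemma `tvequality`: for exchangeable laws on `E^N` over a Polish space,
the minimal probability of the empirical measures differing over couplings equals
the minimal probability of the particle vectors differing over couplings. -/
theorem empirical_coupling_inf_eq {E : Type*} [MeasurableSpace E]
    [TopologicalSpace E] [PolishSpace E] [BorelSpace E]
    (N : ℕ) (μ ν : Measure (Fin N → E))
    [IsProbabilityMeasure μ] [IsProbabilityMeasure ν]
    (hμ : ∀ σ : Equiv.Perm (Fin N), μ.map (fun x => x ∘ σ) = μ)
    (hν : ∀ σ : Equiv.Perm (Fin N), ν.map (fun x => x ∘ σ) = ν) :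
    sInf {r : ℝ | ∃ γ : Measure (Measure E × Measure E),
        γ.map Prod.fst = μ.map (fun x => empMeas x) ∧
        γ.map Prod.snd = ν.map (fun x => empMeas x) ∧
        r = (γ {q | q.1 ≠ q.2}).toReal} =
      sInf {r : ℝ | ∃ γ : Measure ((Fin N → E) × (Fin N → E)),
        γ.map Prod.fst = μ ∧
        γ.map Prod.snd = ν ∧
        r = (γ {q | q.1 ≠ q.2}).toReal} :=
  empirical_coupling_inf_eq_general N μ ν hμ hν
end
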